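/- arXiv:2210.06899 — 5 statements merged into one kernel-verified Lean document; each statement's English description precedes it below -/
import Mathlib

section
/- Let A and B be finite trees, f : B → A a monotone epimorphism, and a ∈ A a ramification point. Then there is at most one vertex b ∈ B witnessing the weak coherence of f at a. -/
open SimpleGraph

namespace PF

/-! ### Basic graph notions (graphs are simple graphs; the reflexive edge relation
of the paper corresponds to `G.Adj x y ∨ x = y`). -/

/-- The order of a vertex: its number of neighbours, which for a finite tree equals
the number of connected components of the complement of the vertex. -/
noncomputable def ord {V : Type*} (T : SimpleGraph V) (a : V) : ℕ :=
  Nat.card (T.neighborSet a)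

/-- The graph obtained by deleting the vertex `a`. -/
def del {V : Type*} (T : SimpleGraph V) (a : V) : SimpleGraph {x : V // x ≠ a} :=
  SimpleGraph.comap Subtype.val T

/-- `x` and `y` are vertices different from `a` lying in the same connected component
of `T ∖ {a}`. -/
def SameComp {V : Type*} (T : SimpleGraph V) (a x y : V) : Prop :=
  ∃ (hx : x ≠ a) (hy : y ≠ a), (del T a).Reachable ⟨x, hx⟩ ⟨y, hy⟩

/-- Epimorphism of graphs (in the reflexive convention of the paper): a vertex surjection
such that a (nontrivial) edge is present in the codomain iff it is witnessed by an edge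
between the fibers. -/
def IsEpi {V W : Type*} (B : SimpleGraph W) (A : SimpleGraph V) (f : W → V) : Prop :=
  Function.Surjective f ∧
    ∀ a a' : V, A.Adj a a' ↔ (a ≠ a' ∧ ∃ b b', f b = a ∧ f b' = a' ∧ B.Adj b b')

/-- A map is monotone if every fiber induces a connected subgraph. -/
def IsMonotone {V W : Type*} (B : SimpleGraph W) (f : W → V) : Prop :=
  ∀ a : V, (SimpleGraph.comap (Subtype.val : (f ⁻¹' {a}) → W) B).Connected

/-- `b` witnesses the weak coherence of `f : B → A` at `a`: `b` is in the fiber of `a`,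
has order at least that of `a`, and the assignment sending a connected component of
`A ∖ {a}` to the connected component of `B ∖ {b}` containing its preimage is a
well-defined injection. -/
def IsWeakWitness {V W : Type*} (A : SimpleGraph V) (B : SimpleGraph W)
    (f : W → V) (a : V) (b : W) : Prop :=
  f b = a ∧ ord A a ≤ ord B b ∧
    ∀ x y : W, f x ≠ a → f y ≠ a →
      (SameComp A a (f x) (f y) ↔ SameComp B b x y)

/-- `b` witnesses the coherence of `f : B → A` at `a`: weak coherence where moreover
`b` has the same order as `a` (so the induced injection between components is a bijection). -/
def IsCohWitness {V W : Type*} (A : SimpleGraph V) (B : SimpleGraph W)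
    (f : W → V) (a : V) (b : W) : Prop :=
  IsWeakWitness A B f a b ∧ ord B b = ord A a

/-- `f : B → A` is weakly coherent: every ramification point of `A` is a point of
weak coherence for `f`. -/
def WeaklyCoherent {V W : Type*} (A : SimpleGraph V) (B : SimpleGraph W) (f : W → V) : Prop :=
  ∀ a : V, 3 ≤ ord A a → ∃ b, IsWeakWitness A B f a b

/-- `f : B → A` is coherent: every ramification point of `A` is a point of coherence for `f`. -/
def Coherent {V W : Type*} (A : SimpleGraph V) (B : SimpleGraph W) (f : W → V) : Prop :=
  ∀ a : V, 3 ≤ ord A a → ∃ b, IsCohWitness A B f a b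

/-! ### The families `𝓕_P` and `𝓖_P` -/

/-- Membership in the family `𝓕_P`: a finite tree with no vertex of order 2. -/
def MemF {V : Type*} (A : SimpleGraph V) : Prop :=
  A.IsTree ∧ ∀ a : V, ord A a ≠ 2

/-- Epimorphisms of the family `𝓕_P` (for `P ⊆ {3,4,…,∞}`, `∞ = ⊤ ∈ P`): monotone
epimorphisms, coherent at points of order in `P`, and weakly coherent at all other
ramification points with a witness of order not in `P`. -/
def EpiF (P : Set ℕ∞) {V W : Type*} (A : SimpleGraph V) (B : SimpleGraph W) (f : W → V) : Prop :=
  IsEpi B A f ∧ IsMonotone B f ∧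
    (∀ a : V, (ord A a : ℕ∞) ∈ P → ∃ b, IsCohWitness A B f a b) ∧
    (∀ a : V, 3 ≤ ord A a → (ord A a : ℕ∞) ∉ P →
      ∃ b, IsWeakWitness A B f a b ∧ (ord B b : ℕ∞) ∉ P)

/-- Membership in the family `𝓖_P`: a finite tree all of whose vertices are endpoints
or have order in `P`. -/
def MemG (P : Set ℕ∞) {V : Type*} (A : SimpleGraph V) : Prop :=
  A.IsTree ∧ ∀ a : V, ord A a ≤ 1 ∨ (ord A a : ℕ∞) ∈ P

/-- Epimorphisms of the family `𝓖_P`: coherent monotone epimorphisms. -/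
def EpiG {V W : Type*} (A : SimpleGraph V) (B : SimpleGraph W) (f : W → V) : Prop :=
  IsEpi B A f ∧ IsMonotone B f ∧ Coherent A B f

/-! ### Projective Fraïssé families of finite graphs -/

/-- A finite graph, on a vertex set `Fin n`.  (Since every finite graph is isomorphic
to one of this form, a family of such graphs automatically has only countably many
isomorphism types.) -/
structure FGraph where
  card : ℕ
  graph : SimpleGraph (Fin card)

/-- A class of finite graphs together with a distinguished class of epimorphisms:
`mor A B f` means that `f` is a distinguished epimorphism from `B` onto `A`. -/
structure Family where
  obj : FGraph → Prop
  mor : ∀ A B : FGraph, (Fin B.card → Fin A.card) → Prop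

/-- `T` is a projective Fraïssé family. -/
structure IsPFF (T : Family) : Prop where
  mor_obj : ∀ A B f, T.mor A B f → T.obj A ∧ T.obj B
  mor_epi : ∀ A B f, T.mor A B f → IsEpi B.graph A.graph f
  id_mem : ∀ A, T.obj A → T.mor A A id
  comp_mem : ∀ A B C f g, T.mor A B f → T.mor B C g → T.mor A C (f ∘ g)
  jpp : ∀ A B, T.obj A → T.obj B → ∃ C f g, T.mor A C f ∧ T.mor B C g
  amalg : ∀ A B C f g, T.mor A B f → T.mor A C g →
    ∃ D h k, T.mor B D h ∧ T.mor C D k ∧ f ∘ h = g ∘ k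

/-- An inverse sequence in the family `T`. -/
structure FSeq (T : Family) where
  F : ℕ → FGraph
  bond : ∀ m n, n ≤ m → Fin (F m).card → Fin (F n).card
  bond_refl : ∀ n x, bond n n le_rfl x = x
  bond_comp : ∀ k m n (h1 : n ≤ m) (h2 : m ≤ k) x,
    bond m n h1 (bond k m h2 x) = bond k n (h1.trans h2) x
  bond_mor : ∀ m n (h : n ≤ m), T.mor (F n) (F m) (bond m n h)

/-- A Fraïssé sequence for the family `T`. -/
structure IsFraisseSeq (T : Family) (S : FSeq T) : Prop where
  proj : ∀ A, T.obj A → ∃ n f, T.mor A (S.F n) f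
  extend : ∀ n (A : FGraph) (f : Fin A.card → Fin (S.F n).card), T.mor (S.F n) A f →
    ∃ (m : ℕ) (h : n ≤ m) (g : Fin (S.F m).card → Fin A.card),
      T.mor A (S.F m) g ∧ f ∘ g = S.bond m n h

/-- The projective Fraïssé limit of a sequence: the inverse limit of the sequence,
as a closed subspace of the product of the (discrete) finite vertex sets. -/
def Limit {T : Family} (S : FSeq T) : Type :=
  {x : ∀ n, Fin (S.F n).card // ∀ m n (h : n ≤ m), S.bond m n h (x m) = x n}

instance {T : Family} (S : FSeq T) : TopologicalSpace (Limit S) := by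
  unfold Limit; infer_instance

/-- The (reflexive) edge relation of the limit. -/
def EdgeRel {T : Family} (S : FSeq T) (x y : Limit S) : Prop :=
  ∀ n, x.1 n = y.1 n ∨ (S.F n).graph.Adj (x.1 n) (y.1 n)

/-- The simple graph on the limit determined by the nontrivial edges. -/
def limitGraph {T : Family} (S : FSeq T) : SimpleGraph (Limit S) where
  Adj x y := x ≠ y ∧ EdgeRel S x y
  symm := by
    constructor
    intro x y h
    exact ⟨h.1.symm, fun n => (h.2 n).imp Eq.symm SimpleGraph.Adj.symm⟩
  loopless := ⟨fun x h => h.1 rfl⟩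

/-- The topological realization of the limit: the quotient by the edge relation. -/
def Realization {T : Family} (S : FSeq T) : Type := Quot (EdgeRel S)

/-- The quotient map onto the topological realization. -/
def realMap {T : Family} (S : FSeq T) : Limit S → Realization S := Quot.mk _

instance {T : Family} (S : FSeq T) : TopologicalSpace (Realization S) := by
  unfold Realization; infer_instance

/-! ### Splitting edges -/

/-- The graph obtained from `A` by splitting the edge `⟨a,b⟩`: a new vertex `∗` is added,
the edge `⟨a,b⟩` is removed and replaced by the edges `⟨a,∗⟩` and `⟨∗,b⟩`. -/
def splitGraph {k : ℕ} (A : SimpleGraph (Fin k)) (a b : Fin k) : SimpleGraph (Fin (k + 1)) :=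
  SimpleGraph.fromRel fun x y =>
    (∃ x' y' : Fin k, x = x'.castSucc ∧ y = y'.castSucc ∧ A.Adj x' y' ∧
      ¬(x' = a ∧ y' = b) ∧ ¬(x' = b ∧ y' = a)) ∨
    (x = Fin.last k ∧ (y = a.castSucc ∨ y = b.castSucc))

/-- The map collapsing the new vertex `∗` of the split graph to the vertex `c`. -/
def splitMap {k : ℕ} (c : Fin k) : Fin (k + 1) → Fin k :=
  fun x => Fin.lastCases c (fun y => y) x

/-- A family allows splitting edges if it is closed under splitting an edge, together
with the two maps collapsing the new vertex to either endpoint of the split edge. -/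
def AllowsSplitting (T : Family) : Prop :=
  ∀ (A : FGraph) (a b : Fin A.card), T.obj A → A.graph.Adj a b →
    T.obj ⟨A.card + 1, splitGraph A.graph a b⟩ ∧
    T.mor A ⟨A.card + 1, splitGraph A.graph a b⟩ (splitMap a) ∧
    T.mor A ⟨A.card + 1, splitGraph A.graph a b⟩ (splitMap b)

/-! ### Points of weak coherence in the limit -/

/-- A point of the limit is a point of weak coherence if from some index on, each
coordinate is a point of weak coherence of the bonding map from the next level,
witnessed by the next coordinate. -/
def LimitWeakCohPoint {T : Family} (S : FSeq T) (x : Limit S) : Prop :=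
  ∃ k : ℕ, ∀ l, k ≤ l →
    3 ≤ ord (S.F l).graph (x.1 l) ∧
    IsWeakWitness (S.F l).graph (S.F (l + 1)).graph
      (S.bond (l + 1) l (Nat.le_succ l)) (x.1 l) (x.1 (l + 1))

/-! ### Topological notions: number of branches at a point, dendrites, arcs -/

/-- The order of a point of a topological space: the number (in `ℕ∞`) of connected
components of the complement of the point. -/
noncomputable def ordAt (X : Type*) [TopologicalSpace X] (x : X) : ℕ∞ :=
  ENat.card (ConnectedComponents {y : X // y ≠ x})

/-- `A` is an arc in `X` from `x` to `y`: the image of a continuous injection of the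
unit interval sending `0` to `x` and `1` to `y`. -/
def IsArcSet {X : Type*} [TopologicalSpace X] (A : Set X) (x y : X) : Prop :=
  ∃ f : unitInterval → X, Continuous f ∧ Function.Injective f ∧
    Set.range f = A ∧ f 0 = x ∧ f 1 = y

/-- A dendrite: a nondegenerate compact connected locally connected metrizable space in
which every two distinct points are joined by a unique arc. -/
def IsDendrite (X : Type*) [TopologicalSpace X] : Prop :=
  Nontrivial X ∧ CompactSpace X ∧ ConnectedSpace X ∧ LocallyConnectedSpace X ∧
    TopologicalSpace.MetrizableSpace X ∧
    ∀ x y : X, x ≠ y → ∃! A : Set X, IsArcSet A x y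

/-- A set is arcwise dense if every arc with distinct endpoints meets it. -/
def ArcwiseDense {X : Type*} [TopologicalSpace X] (s : Set X) : Prop :=
  ∀ x y : X, x ≠ y → ∀ A : Set X, IsArcSet A x y → ∃ z ∈ s, z ∈ A

/-! ### Topological graphs, graph-arcs and endpoints -/

/-- A topological graph: a compact Hausdorff zero-dimensional second countable space
with a closed (reflexive) edge relation. -/
def IsTopGraph (X : Type*) [TopologicalSpace X] (G : SimpleGraph X) : Prop :=
  CompactSpace X ∧ T2Space X ∧ TotallyDisconnectedSpace X ∧
    SecondCountableTopology X ∧ IsClosed {p : X × X | G.Adj p.1 p.2 ∨ p.1 = p.2}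

/-- Connectedness of a topological graph: there is no partition of the vertex set into
two nonempty disjoint closed sets with no edge between them. -/
def GraphConn (X : Type*) [TopologicalSpace X] (G : SimpleGraph X) : Prop :=
  ¬ ∃ s t : Set X, IsClosed s ∧ IsClosed t ∧ s.Nonempty ∧ t.Nonempty ∧
      Disjoint s t ∧ s ∪ t = Set.univ ∧ ∀ a ∈ s, ∀ b ∈ t, ¬ G.Adj a b

/-- The topological graph obtained by deleting the vertex `a` remains connected. -/
def GraphConnDel (X : Type*) [TopologicalSpace X] (G : SimpleGraph X) (a : X) : Prop :=
  GraphConn {v : X // v ≠ a} (G.comap Subtype.val)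

/-- A topological graph is an arc if it is connected and all but at most two of its
vertices disconnect it when removed. -/
def IsArcGraph (X : Type*) [TopologicalSpace X] (G : SimpleGraph X) : Prop :=
  GraphConn X G ∧ ∃ e : Set X, (∃ u v : X, e ⊆ {u, v}) ∧
    ∀ a : X, a ∉ e → ¬ GraphConnDel X G a

/-- An endpoint of a topological graph which is an arc: a vertex whose removal does not
disconnect it. -/
def ArcEndpoint (X : Type*) [TopologicalSpace X] (G : SimpleGraph X) (a : X) : Prop :=
  GraphConnDel X G a

/-- `x` is an endpoint of the topological graph `Gr` on `Y`: whenever a topological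
graph which is an arc embeds into `Gr` with `x` in the image, `x` is the image of an
endpoint of the arc. -/
def GraphEndpoint (Y : Type*) [TopologicalSpace Y] (Gr : SimpleGraph Y) (x : Y) : Prop :=
  ∀ (X : Type) [TopologicalSpace X] (H : SimpleGraph X), IsTopGraph X H → IsArcGraph X H →
    ∀ h : X → Y, Function.Injective h →
      (‹TopologicalSpace X› = TopologicalSpace.induced h inferInstance) →
      (∀ a b : X, H.Adj a b ↔ Gr.Adj (h a) (h b)) →
      x ∈ Set.range h → ∃ e : X, ArcEndpoint X H e ∧ h e = x

/-! ### Betweenness and immersions in finite trees -/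

/-- `y` lies between `x` and `z`: every walk from `x` to `z` passes through `y`
(in a tree, this says exactly that `y` lies on the unique path from `x` to `z`). -/
def Between {V : Type*} (T : SimpleGraph V) (x y z : V) : Prop :=
  ∀ p : T.Walk x z, y ∈ p.support

/-- An immersion of `A` into `B`: a map preserving and reflecting betweenness of
pairwise distinct vertices. -/
def IsImmersion {V W : Type*} (A : SimpleGraph V) (B : SimpleGraph W) (i : V → W) : Prop :=
  ∀ a b c : V, a ≠ b → b ≠ c → a ≠ c →
    (Between A a b c ↔ Between B (i a) (i b) (i c))

/-! ### The families `𝓖_P` and `𝓕_P` as families of finite graphs -/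

/-- The family `𝓖_P` as a family of finite graphs with distinguished epimorphisms. -/
def familyG (P : Set ℕ∞) : Family where
  obj A := MemG P A.graph
  mor A B f := MemG P A.graph ∧ MemG P B.graph ∧ EpiG A.graph B.graph f

/-- The family `𝓕_P` as a family of finite graphs with distinguished epimorphisms. -/
def familyF (P : Set ℕ∞) : Family where
  obj A := MemF A.graph
  mor A B f := MemF A.graph ∧ MemF B.graph ∧ EpiF P A.graph B.graph f

end PF

section Aux

open SimpleGraph

private lemma lift_walk {β : Type*} (B : SimpleGraph β) (b : β) :
    ∀ {x y : β} (p : B.Walk x y), b ∉ p.support → ∀ (hx : x ≠ b) (hy : y ≠ b),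
      (PF.del B b).Reachable ⟨x, hx⟩ ⟨y, hy⟩ := by
  intro x y p
  induction p with
  | nil => intro _ _ _; exact Reachable.refl _
  | @cons u z y h p ih =>
      intro hbmem hx hy
      rw [SimpleGraph.Walk.support_cons, List.mem_cons] at hbmem
      push_neg at hbmem
      have hz : z ≠ b := fun hzb => hbmem.2 (hzb ▸ p.start_mem_support)
      have hadj : (PF.del B b).Adj ⟨u, hx⟩ ⟨z, hz⟩ := h
      exact hadj.reachable.trans (ih hbmem.2 hz hy)

private lemma unlift_walk {α : Type*} (A : SimpleGraph α) (a : α) :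
    ∀ {u v : {x : α // x ≠ a}} (_ : (PF.del A a).Walk u v),
      ∃ q : A.Walk u.1 v.1, a ∉ q.support := by
  intro u v p
  induction p with
  | @nil w =>
      refine ⟨SimpleGraph.Walk.nil, ?_⟩
      simp only [SimpleGraph.Walk.support_nil, List.mem_singleton]
      exact fun h => w.2 h.symm
  | @cons u z y h p ih =>
      obtain ⟨q, hq⟩ := ih
      refine ⟨SimpleGraph.Walk.cons (show A.Adj u.1 z.1 from h) q, ?_⟩
      rw [SimpleGraph.Walk.support_cons, List.mem_cons]
      rintro (h | hmem)
      · exact u.2 h.symm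
      · exact hq hmem

private lemma neighbors_not_sameComp {α : Type*} {A : SimpleGraph α} (hA : A.IsTree)
    {a a0 a1 : α} (h0 : A.Adj a a0) (h1 : A.Adj a a1) (hne : a0 ≠ a1) :
    ¬ PF.SameComp A a a0 a1 := by
  classical
  rintro ⟨hx, hy, hr⟩
  obtain ⟨w⟩ := hr
  obtain ⟨q, hq⟩ := unlift_walk A a w
  have hqp : (q.toPath : A.Walk a0 a1).IsPath := q.toPath.2
  have hqs : a ∉ (q.toPath : A.Walk a0 a1).support :=
    fun hmem => hq (SimpleGraph.Walk.support_toPath_subset q hmem)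
  have hp2 : (SimpleGraph.Walk.cons h0 (q.toPath : A.Walk a0 a1)).IsPath := hqp.cons hqs
  have hp1 : (SimpleGraph.Path.singleton h1 : A.Walk a a1).IsPath :=
    (SimpleGraph.Path.singleton h1).2
  have := (hA.existsUnique_path a a1).unique hp2 hp1
  have hlen := congrArg SimpleGraph.Walk.length this
  simp [SimpleGraph.Path.singleton] at hlen
  exact hne (SimpleGraph.Walk.Nil.eq hlen)

private lemma takeUntil_avoids_end {β : Type*} [DecidableEq β] {B : SimpleGraph β} {x b b' : β}
    {p : B.Walk x b} (hp : p.IsPath) (hmem : b' ∈ p.support) (hne : b' ≠ b) :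
    b ∉ (p.takeUntil b' hmem).support := by
  intro hbad
  have hspec := p.take_spec hmem
  have hnodup : p.support.Nodup := hp.2
  rw [← hspec, SimpleGraph.Walk.support_append] at hnodup
  have hdrop : b ∈ (p.dropUntil b' hmem).support.tail := by
    have := (p.dropUntil b' hmem).end_mem_support
    rw [(p.dropUntil b' hmem).support_eq_cons, List.mem_cons] at this
    exact this.resolve_left (fun h => hne h.symm)
  exact (List.disjoint_of_nodup_append hnodup) hbad hdrop

private lemma reach_end {β : Type*} {B : SimpleGraph β} (hB : B.Connected) {b b' x : β}
    (hbb' : b' ≠ b) (hxb : x ≠ b) (hne : ¬ PF.SameComp B b x b') :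
    ∃ p : B.Walk x b, b' ∉ p.support := by
  classical
  obtain ⟨w⟩ := hB.preconnected x b
  set p : B.Walk x b := (w.toPath : B.Walk x b) with hp
  by_cases hmem : b' ∈ p.support
  · exfalso
    have hbq : b ∉ (p.takeUntil b' hmem).support :=
      takeUntil_avoids_end w.toPath.2 hmem hbb'
    exact hne ⟨hxb, hbb', lift_walk B b (p.takeUntil b' hmem) hbq hxb hbb'⟩
  · exact ⟨p, hmem⟩

private lemma sameComp_of_not_sameComp {β : Type*} {B : SimpleGraph β} (hB : B.Connected)
    {b b' x y : β} (hbb' : b' ≠ b) (hxb : x ≠ b) (hyb : y ≠ b) (hxb' : x ≠ b')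
    (hyb' : y ≠ b')
    (hx : ¬ PF.SameComp B b x b') (hy : ¬ PF.SameComp B b y b') :
    PF.SameComp B b' x y := by
  obtain ⟨p, hp⟩ := reach_end hB hbb' hxb hx
  obtain ⟨q, hq⟩ := reach_end hB hbb' hyb hy
  have hsup : b' ∉ (p.append q.reverse).support := by
    rw [SimpleGraph.Walk.mem_support_append_iff]
    rintro (h | h)
    · exact hp h
    · rw [SimpleGraph.Walk.support_reverse, List.mem_reverse] at h
      exact hq h
  exact ⟨hxb', hyb', lift_walk B b' _ hsup hxb' hyb'⟩

end Aux

private lemma sameComp_trans' {β : Type*} {B : SimpleGraph β} {b x y z : β}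
    (h1 : PF.SameComp B b x z) (h2 : PF.SameComp B b y z) : PF.SameComp B b x y := by
  obtain ⟨hx, hz, r1⟩ := h1
  obtain ⟨hy, hz', r2⟩ := h2
  exact ⟨hx, hy, r1.trans r2.symm⟩



/-- Let `A` and `B` be finite trees, `f : B → A` a monotone epimorphism,
and `a ∈ A` a ramification point. Then there is at most one vertex `b ∈ B` witnessing
the weak coherence of `f` at `a`. -/
theorem weak_coherence_witness_unique {α β : Type} [Fintype α] [Fintype β]
    (A : SimpleGraph α) (B : SimpleGraph β) (f : β → α)
    (hA : A.IsTree) (hB : B.IsTree)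
    (hepi : PF.IsEpi B A f) (hmono : PF.IsMonotone B f)
    (a : α) (ha : 3 ≤ PF.ord A a)
    (b b' : β) (hb : PF.IsWeakWitness A B f a b) (hb' : PF.IsWeakWitness A B f a b') :
    b = b' := by
  by_contra hne
  classical
  have hconnB : B.Connected := hB.isConnected
  -- extract three distinct neighbours of `a`
  have hfin : (A.neighborSet a).Finite := Set.toFinite _
  have hc : 3 ≤ hfin.toFinset.card := by
    have := ha
    rw [PF.ord, Nat.card_coe_set_eq, Set.ncard_eq_toFinset_card _ hfin] at this
    exact this
  obtain ⟨a0, h0m⟩ := Finset.card_pos.mp (show 0 < hfin.toFinset.card by omega)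
  obtain ⟨a1, h1m⟩ := Finset.card_pos.mp (show 0 < (hfin.toFinset.erase a0).card by
    rw [Finset.card_erase_of_mem h0m]; omega)
  obtain ⟨a2, h2m⟩ := Finset.card_pos.mp
    (show 0 < ((hfin.toFinset.erase a0).erase a1).card by
      rw [Finset.card_erase_of_mem h1m, Finset.card_erase_of_mem h0m]; omega)
  have d10 : a1 ≠ a0 := Finset.ne_of_mem_erase h1m
  have d21 : a2 ≠ a1 := Finset.ne_of_mem_erase h2m
  have d20 : a2 ≠ a0 := Finset.ne_of_mem_erase (Finset.mem_of_mem_erase h2m)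
  have h0 : A.Adj a a0 := hfin.mem_toFinset.mp h0m
  have h1 : A.Adj a a1 := hfin.mem_toFinset.mp (Finset.mem_of_mem_erase h1m)
  have h2 : A.Adj a a2 := hfin.mem_toFinset.mp
    (Finset.mem_of_mem_erase (Finset.mem_of_mem_erase h2m))
  obtain ⟨x0, hx0⟩ := hepi.1 a0
  obtain ⟨x1, hx1⟩ := hepi.1 a1
  obtain ⟨x2, hx2⟩ := hepi.1 a2
  have hx0a : f x0 ≠ a := by rw [hx0]; exact h0.ne'
  have hx1a : f x1 ≠ a := by rw [hx1]; exact h1.ne'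
  have hx2a : f x2 ≠ a := by rw [hx2]; exact h2.ne'
  have hx0b : x0 ≠ b := fun h => hx0a (h ▸ hb.1)
  have hx1b : x1 ≠ b := fun h => hx1a (h ▸ hb.1)
  have hx2b : x2 ≠ b := fun h => hx2a (h ▸ hb.1)
  have hx0b' : x0 ≠ b' := fun h => hx0a (h ▸ hb'.1)
  have hx1b' : x1 ≠ b' := fun h => hx1a (h ▸ hb'.1)
  have hx2b' : x2 ≠ b' := fun h => hx2a (h ▸ hb'.1)
  have nA01 : ¬ PF.SameComp A a (f x0) (f x1) := by
    rw [hx0, hx1]; exact neighbors_not_sameComp hA h0 h1 d10.symm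
  have nA02 : ¬ PF.SameComp A a (f x0) (f x2) := by
    rw [hx0, hx2]; exact neighbors_not_sameComp hA h0 h2 d20.symm
  have nA12 : ¬ PF.SameComp A a (f x1) (f x2) := by
    rw [hx1, hx2]; exact neighbors_not_sameComp hA h1 h2 d21.symm
  have nB01 : ¬ PF.SameComp B b x0 x1 := fun h => nA01 ((hb.2.2 x0 x1 hx0a hx1a).mpr h)
  have nB02 : ¬ PF.SameComp B b x0 x2 := fun h => nA02 ((hb.2.2 x0 x2 hx0a hx2a).mpr h)
  have nB12 : ¬ PF.SameComp B b x1 x2 := fun h => nA12 ((hb.2.2 x1 x2 hx1a hx2a).mpr h)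
  have nB'01 : ¬ PF.SameComp B b' x0 x1 := fun h => nA01 ((hb'.2.2 x0 x1 hx0a hx1a).mpr h)
  have nB'02 : ¬ PF.SameComp B b' x0 x2 := fun h => nA02 ((hb'.2.2 x0 x2 hx0a hx2a).mpr h)
  have nB'12 : ¬ PF.SameComp B b' x1 x2 := fun h => nA12 ((hb'.2.2 x1 x2 hx1a hx2a).mpr h)
  have hb'b : b' ≠ b := Ne.symm hne
  by_cases c0 : PF.SameComp B b x0 b'
  · have c1 : ¬ PF.SameComp B b x1 b' := fun h => nB01 (sameComp_trans' c0 h)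
    have c2 : ¬ PF.SameComp B b x2 b' := fun h => nB02 (sameComp_trans' c0 h)
    exact nB'12 (sameComp_of_not_sameComp hconnB hb'b hx1b hx2b hx1b' hx2b' c1 c2)
  · by_cases c1 : PF.SameComp B b x1 b'
    · have c2 : ¬ PF.SameComp B b x2 b' := fun h => nB12 (sameComp_trans' c1 h)
      exact nB'02 (sameComp_of_not_sameComp hconnB hb'b hx0b hx2b hx0b' hx2b' c0 c2)
    · exact nB'01 (sameComp_of_not_sameComp hconnB hb'b hx0b hx1b hx0b' hx1b' c0 c1)
end

section
/- Let A, B, C be finite trees and let f : A → B and g : B → C be coherent monotone epimorphisms. Then g∘f : A → C is a coherent monotone epimorphism. -/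
open SimpleGraph

lemma preimage_connected {α β : Type*} (A : SimpleGraph α) (B : SimpleGraph β)
    (f : α → β) (hE : PF.IsEpi A B f) (hM : PF.IsMonotone A f) (S : Set β)
    (hS : (B.comap (Subtype.val : S → β)).Connected) :
    (A.comap (Subtype.val : (f ⁻¹' S) → α)).Connected := by
  have fib : ∀ (b : β) (hb : b ∈ S) (x y : α) (hx : f x = b) (hy : f y = b),
      (A.comap (Subtype.val : (f ⁻¹' S) → α)).Reachable
        ⟨x, show f x ∈ S by rw [hx]; exact hb⟩
        ⟨y, show f y ∈ S by rw [hy]; exact hb⟩ := by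
    intro b hb x y hx hy
    have h1 : (A.comap (Subtype.val : (f ⁻¹' {b}) → α)).Reachable ⟨x, hx⟩ ⟨y, hy⟩ :=
      (hM b).preconnected _ _
    let ι : (A.comap (Subtype.val : (f ⁻¹' {b}) → α)) →g
        (A.comap (Subtype.val : (f ⁻¹' S) → α)) :=
      { toFun := fun z => ⟨z.1, show f z.1 ∈ S by rw [show f z.1 = b from z.2]; exact hb⟩,
        map_rel' := fun h => h }
    exact h1.map ι
  have hne : Nonempty ↥(f ⁻¹' S) := by
    obtain ⟨⟨b, hb⟩⟩ := hS.nonempty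
    obtain ⟨a, ha⟩ := hE.1 b
    exact ⟨⟨a, show f a ∈ S by rw [ha]; exact hb⟩⟩
  refine SimpleGraph.Connected.mk ?_
  rintro ⟨x, hx⟩ ⟨y, hy⟩
  obtain ⟨p⟩ : (B.comap (Subtype.val : S → β)).Reachable ⟨f x, hx⟩ ⟨f y, hy⟩ :=
    hS.preconnected _ _
  have key : ∀ (b b' : S) (p : (B.comap (Subtype.val : S → β)).Walk b b')
      (x y : α) (hx : f x = b.1) (hy : f y = b'.1),
      (A.comap (Subtype.val : (f ⁻¹' S) → α)).Reachable
        ⟨x, show f x ∈ S by rw [hx]; exact b.2⟩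
        ⟨y, show f y ∈ S by rw [hy]; exact b'.2⟩ := by
    intro b b' p
    induction p with
    | @nil u =>
      intro x y hx hy
      exact fib u.1 u.2 x y hx hy
    | @cons u v w hadj q ih =>
      intro x y hx hy
      have hBadj : B.Adj u.1 v.1 := hadj
      obtain ⟨-, a, a', ha, ha', haa⟩ := (hE.2 u.1 v.1).mp hBadj
      have r1 := fib u.1 u.2 x a hx ha
      have r3 := ih a' y ha' hy
      have r2 : (A.comap (Subtype.val : (f ⁻¹' S) → α)).Adj
          ⟨a, show f a ∈ S by rw [ha]; exact u.2⟩
          ⟨a', show f a' ∈ S by rw [ha']; exact v.2⟩ := haa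
      exact (r1.trans r2.reachable).trans r3
  exact key ⟨f x, hx⟩ ⟨f y, hy⟩ p x y rfl rfl

/-- Let `A, B, C` be finite trees and let `f : A → B` and `g : B → C` be
coherent monotone epimorphisms.  Then `g ∘ f : A → C` is a coherent monotone
epimorphism. -/

theorem coherent_comp {α β γ : Type} [Fintype α] [Fintype β] [Fintype γ]
    (A : SimpleGraph α) (B : SimpleGraph β) (C : SimpleGraph γ)
    (hA : A.IsTree) (hB : B.IsTree) (hC : C.IsTree)
    (f : α → β) (g : β → γ)
    (hfE : PF.IsEpi A B f) (hfM : PF.IsMonotone A f) (hfC : PF.Coherent B A f)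
    (hgE : PF.IsEpi B C g) (hgM : PF.IsMonotone B g) (hgC : PF.Coherent C B g) :
    PF.IsEpi A C (g ∘ f) ∧ PF.IsMonotone A (g ∘ f) ∧ PF.Coherent C A (g ∘ f) := by
  refine ⟨⟨hgE.1.comp hfE.1, ?_⟩, ?_, ?_⟩
  · intro c c'
    constructor
    · intro h
      obtain ⟨hne, b, b', hb, hb', hadj⟩ := (hgE.2 c c').mp h
      obtain ⟨hne2, a, a', ha, ha', hadj2⟩ := (hfE.2 b b').mp hadj
      exact ⟨hne, a, a', by simp [Function.comp, ha, hb],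
        by simp [Function.comp, ha', hb'], hadj2⟩
    · rintro ⟨hne, a, a', ha, ha', hadj⟩
      have hfne : f a ≠ f a' := by
        intro h
        apply hne
        rw [← ha, ← ha']
        simp [Function.comp, h]
      have hBadj : B.Adj (f a) (f a') := (hfE.2 _ _).mpr ⟨hfne, a, a', rfl, rfl, hadj⟩
      exact (hgE.2 c c').mpr ⟨hne, f a, f a', ha, ha', hBadj⟩
  · intro c
    exact preimage_connected A B f hfE hfM (g ⁻¹' {c}) (hgM c)
  · intro c hc
    obtain ⟨b, ⟨hgb, hord1, hsame1⟩, hord1'⟩ := hgC c hc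
    have h3b : 3 ≤ PF.ord B b := hord1' ▸ hc
    obtain ⟨a, ⟨hfa, hord2, hsame2⟩, hord2'⟩ := hfC b h3b
    refine ⟨a, ⟨show g (f a) = c by rw [hfa]; exact hgb, ?_, ?_⟩, hord2'.trans hord1'⟩
    · rw [hord2'.trans hord1']
    · intro x y hxc hyc
      have hx : f x ≠ b := by
        intro h
        exact hxc (show g (f x) = c by rw [h]; exact hgb)
      have hy : f y ≠ b := by
        intro h
        exact hyc (show g (f y) = c by rw [h]; exact hgb)
      exact (hsame1 (f x) (f y) hxc hyc).trans (hsame2 x y hx hy)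
end

section
/- Let A and B be finite trees in which every vertex has order at most 3, and let f : A → B be a monotone epimorphism. Then f is coherent. -/
open SimpleGraph

/-! ### Auxiliary lemmas for Statement 4 -/

namespace AuxPF
open SimpleGraph

variable {V : Type*} {T : SimpleGraph V}

lemma sameComp_refl {a x : V} (hx : x ≠ a) : PF.SameComp T a x x :=
  ⟨hx, hx, Reachable.refl _⟩

lemma sameComp_symm {a x y : V} (h : PF.SameComp T a x y) : PF.SameComp T a y x := by
  obtain ⟨hx, hy, hr⟩ := h; exact ⟨hy, hx, hr.symm⟩

lemma sameComp_trans {a x y z : V} (h : PF.SameComp T a x y) (h' : PF.SameComp T a y z) :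
    PF.SameComp T a x z := by
  obtain ⟨hx, hy, hr⟩ := h; obtain ⟨hy', hz, hr'⟩ := h'
  exact ⟨hx, hz, hr.trans hr'⟩

lemma sameComp_of_walk {a x y : V} (w : T.Walk x y) (hw : a ∉ w.support) :
    PF.SameComp T a x y := by
  induction w with
  | nil =>
    exact sameComp_refl (fun h => hw (by simp [h]))
  | cons h p ih =>
    rename_i u c d
    rw [SimpleGraph.Walk.support_cons, List.mem_cons] at hw
    push_neg at hw
    obtain ⟨hc, hy, hr⟩ := ih hw.2
    have hu : u ≠ a := fun he => hw.1 he.symm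
    refine ⟨hu, hy, Reachable.trans ?_ hr⟩
    exact SimpleGraph.Adj.reachable (by exact h : (PF.del T a).Adj ⟨u, hu⟩ ⟨c, hc⟩)

lemma walk_of_sameComp {a x y : V} (h : PF.SameComp T a x y) :
    ∃ w : T.Walk x y, a ∉ w.support := by
  obtain ⟨hx, hy, hr⟩ := h
  obtain ⟨w⟩ : (SimpleGraph.comap Subtype.val T).Reachable ⟨x, hx⟩ ⟨y, hy⟩ := hr
  refine ⟨w.map (SimpleGraph.Hom.comap Subtype.val T), ?_⟩
  intro hmem
  have hmem' : a ∈ (w.map (SimpleGraph.Hom.comap Subtype.val T)).support := hmem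
  rw [SimpleGraph.Walk.support_map, List.mem_map] at hmem'
  obtain ⟨v, _, hv⟩ := hmem'
  exact v.2 hv

section Tree

variable (hT : T.IsTree)
include hT

lemma path_support_subset_walk {x y : V} (p w : T.Walk x y) (hp : p.IsPath) :
    p.support ⊆ w.support := by
  classical
  have h : (⟨p, hp⟩ : T.Path x y) = w.toPath :=
    (SimpleGraph.isAcyclic_iff_path_unique.mp hT.IsAcyclic) _ _
  have hs : p.support = (w.toPath : T.Walk x y).support := by rw [← h]
  rw [hs]
  exact SimpleGraph.Walk.support_toPath_subset w

lemma neighbors_not_sameComp {b n n' : V} (h : T.Adj b n) (h' : T.Adj b n')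
    (hne : n ≠ n') : ¬ PF.SameComp T b n n' := by
  intro hs
  obtain ⟨w, hw⟩ := walk_of_sameComp hs
  have hpath : (SimpleGraph.Walk.cons h.symm (SimpleGraph.Walk.cons h' SimpleGraph.Walk.nil)).IsPath := by
    simp [SimpleGraph.Walk.isPath_def, h.ne', h'.ne, hne]
  have hsub := path_support_subset_walk hT _ w hpath
  apply hw
  apply hsub
  simp

lemma exists_neighbor_sameComp {b q : V} (hq : q ≠ b) :
    ∃ n, T.Adj b n ∧ PF.SameComp T b q n := by
  classical
  obtain ⟨w⟩ := hT.isConnected b q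
  have hpath : w.bypass.IsPath := SimpleGraph.Walk.bypass_isPath w
  set p := w.bypass with hpdef
  clear_value p
  cases p with
  | nil => exact absurd rfl hq
  | cons hadj p' =>
    rename_i c
    rw [SimpleGraph.Walk.cons_isPath_iff] at hpath
    exact ⟨c, hadj, sameComp_symm (sameComp_of_walk p' hpath.2)⟩

lemma median {x₂ : V} :
    ∀ {s x₁ : V} (p : T.Walk s x₁) (q : T.Walk s x₂) (r : T.Walk x₁ x₂), p.IsPath → q.IsPath →
      ∃ m, m ∈ p.support ∧ m ∈ q.support ∧ m ∈ r.support := by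
  intro s x₁ p
  induction p with
  | nil =>
    intro q r _ _
    exact ⟨_, by simp, q.start_mem_support, r.start_mem_support⟩
  | @cons u c x1 h p' ih =>
    intro q r hp hq
    by_cases hs : u ∈ r.support
    · exact ⟨u, SimpleGraph.Walk.start_mem_support _, q.start_mem_support, hs⟩
    · cases q with
      | nil => exact absurd r.end_mem_support hs
      | @cons _ d _ h2 q' =>
        rw [SimpleGraph.Walk.cons_isPath_iff] at hp hq
        have s1 : PF.SameComp T u c x1 := sameComp_of_walk p' hp.2
        have s2 : PF.SameComp T u x1 x₂ := sameComp_of_walk r hs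
        have s3 : PF.SameComp T u x₂ d := sameComp_symm (sameComp_of_walk q' hq.2)
        have hcd : c = d := by
          by_contra hne
          exact neighbors_not_sameComp hT h h2 hne
            (sameComp_trans s1 (sameComp_trans s2 s3))
        subst hcd
        obtain ⟨m, hm1, hm2, hm3⟩ := ih q' r hp.1 hq.1
        exact ⟨m, by simp [hm1], by simp [hm2], hm3⟩

end Tree

section Epi

variable {W' : Type*} {A : SimpleGraph V} {B : SimpleGraph W'} {f : V → W'}

lemma fiber_walk (hmono : PF.IsMonotone A f) {x y : V} (h : f x = f y) :
    ∃ w : A.Walk x y, ∀ v ∈ w.support, f v = f x := by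
  have hc := hmono (f x)
  have hx : x ∈ f ⁻¹' {f x} := rfl
  have hy : y ∈ f ⁻¹' {f x} := h.symm
  obtain ⟨w⟩ := hc.preconnected ⟨x, hx⟩ ⟨y, hy⟩
  refine ⟨w.map (SimpleGraph.Hom.comap Subtype.val A), ?_⟩
  intro v hv
  have hv' : v ∈ (w.map (SimpleGraph.Hom.comap Subtype.val A)).support := hv
  rw [SimpleGraph.Walk.support_map, List.mem_map] at hv'
  obtain ⟨u, _, rfl⟩ := hv'
  exact u.2

lemma image_walk (hepi : PF.IsEpi A B f) {x y : V} (w : A.Walk x y) :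
    ∃ Wk : B.Walk (f x) (f y), ∀ q ∈ Wk.support, ∃ v ∈ w.support, f v = q := by
  induction w with
  | nil => exact ⟨SimpleGraph.Walk.nil, by simp⟩
  | @cons u c y h p ih =>
    obtain ⟨Wk, hWk⟩ := ih
    by_cases he : f u = f c
    · refine ⟨Wk.copy he.symm rfl, ?_⟩
      intro q hq
      rw [SimpleGraph.Walk.support_copy] at hq
      obtain ⟨v, hv, hfv⟩ := hWk q hq
      exact ⟨v, by simp [hv], hfv⟩
    · have hadj : B.Adj (f u) (f c) := (hepi.2 _ _).mpr ⟨he, u, c, rfl, rfl, h⟩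
      refine ⟨SimpleGraph.Walk.cons hadj Wk, ?_⟩
      intro q hq
      rw [SimpleGraph.Walk.support_cons, List.mem_cons] at hq
      rcases hq with rfl | hq
      · exact ⟨u, by simp, rfl⟩
      · obtain ⟨v, hv, hfv⟩ := hWk q hq
        exact ⟨v, by simp [hv], hfv⟩

lemma lift_walk (hepi : PF.IsEpi A B f) (hmono : PF.IsMonotone A f) :
    ∀ {s t : W'} (Wk : B.Walk s t) {x y : V}, f x = s → f y = t →
      ∃ w : A.Walk x y, ∀ v ∈ w.support, f v ∈ Wk.support := by
  intro s t Wk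
  induction Wk with
  | nil =>
    intro x y hx hy
    obtain ⟨w, hw⟩ := fiber_walk hmono (hx.trans hy.symm)
    exact ⟨w, fun v hv => by simp [hw v hv, hx]⟩
  | @cons s c t hadj Wk' ih =>
    intro x y hx hy
    obtain ⟨hne, u, u', hu, hu', hA⟩ := (hepi.2 _ _).mp hadj
    obtain ⟨w₁, hw₁⟩ := fiber_walk hmono (hx.trans hu.symm)
    obtain ⟨w₂, hw₂⟩ := ih hu' hy
    refine ⟨w₁.append (SimpleGraph.Walk.cons hA w₂), ?_⟩
    intro v hv
    rw [SimpleGraph.Walk.mem_support_append_iff] at hv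
    rcases hv with hv | hv
    · simp [hw₁ v hv, hx]
    · rw [SimpleGraph.Walk.support_cons, List.mem_cons] at hv
      rcases hv with rfl | hv
      · simp [hu]
      · simp [hw₂ v hv]

lemma lift_sameComp (hepi : PF.IsEpi A B f) (hmono : PF.IsMonotone A f)
    {b : W'} {x y : V} (h : PF.SameComp B b (f x) (f y)) :
    ∃ w : A.Walk x y, ∀ v ∈ w.support, f v ≠ b := by
  obtain ⟨Wk, hWk⟩ := walk_of_sameComp h
  obtain ⟨w, hw⟩ := lift_walk hepi hmono Wk rfl rfl
  exact ⟨w, fun v hv he => hWk (he ▸ hw v hv)⟩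

lemma walk_hits (hepi : PF.IsEpi A B f) {b : W'} {x y : V}
    (hns : ¬ PF.SameComp B b (f x) (f y)) (w : A.Walk x y) :
    ∃ v ∈ w.support, f v = b := by
  obtain ⟨Wk, hWk⟩ := image_walk hepi w
  by_cases hb : b ∈ Wk.support
  · exact hWk b hb
  · exact absurd (sameComp_of_walk Wk hb) hns

end Epi

end AuxPF

/-- Let `A` and `B` be finite trees in which every vertex has order at
most 3, and let `f : A → B` be a monotone epimorphism.  Then `f` is coherent. -/
theorem coherent_of_maxDegree_le_three {α β : Type} [Fintype α] [Fintype β]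
    (A : SimpleGraph α) (B : SimpleGraph β)
    (hA : A.IsTree) (hB : B.IsTree)
    (hordA : ∀ a : α, PF.ord A a ≤ 3) (hordB : ∀ b : β, PF.ord B b ≤ 3)
    (f : α → β) (hepi : PF.IsEpi A B f) (hmono : PF.IsMonotone A f) :
    PF.Coherent B A f := by
  classical
  intro b h3
  obtain ⟨hsurj, hiff⟩ := hepi
  -- the order of b is exactly 3
  have hob : PF.ord B b = 3 := le_antisymm (hordB b) h3
  have hcard : (B.neighborSet b).ncard = 3 := by
    rw [← Nat.card_coe_set_eq]; exact hob
  obtain ⟨n₀, n₁, n₂, e01, e02, e12, hset⟩ := Set.ncard_eq_three.mp hcard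
  have hadj0 : B.Adj b n₀ := by
    have : n₀ ∈ B.neighborSet b := by rw [hset]; simp
    exact this
  have hadj1 : B.Adj b n₁ := by
    have : n₁ ∈ B.neighborSet b := by rw [hset]; simp
    exact this
  have hadj2 : B.Adj b n₂ := by
    have : n₂ ∈ B.neighborSet b := by rw [hset]; simp
    exact this
  -- every vertex ≠ b is in the class of one of the three neighbours
  have hclassB : ∀ q : β, q ≠ b → PF.SameComp B b q n₀ ∨ PF.SameComp B b q n₁ ∨
      PF.SameComp B b q n₂ := by
    intro q hq
    obtain ⟨n, hn, hs⟩ := AuxPF.exists_neighbor_sameComp hB hq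
    have : n ∈ B.neighborSet b := hn
    rw [hset] at this
    rcases this with rfl | rfl | rfl
    · exact Or.inl hs
    · exact Or.inr (Or.inl hs)
    · exact Or.inr (Or.inr hs)
  -- preimages of the three neighbours
  obtain ⟨x₀, hx₀⟩ := hsurj n₀
  obtain ⟨x₁, hx₁⟩ := hsurj n₁
  obtain ⟨x₂, hx₂⟩ := hsurj n₂
  have hfx₀ : f x₀ ≠ b := by rw [hx₀]; exact hadj0.ne'
  have hfx₁ : f x₁ ≠ b := by rw [hx₁]; exact hadj1.ne'
  have hfx₂ : f x₂ ≠ b := by rw [hx₂]; exact hadj2.ne'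
  -- the median m of x₀, x₁, x₂
  obtain ⟨w01⟩ := hA.isConnected x₀ x₁
  obtain ⟨w02⟩ := hA.isConnected x₀ x₂
  obtain ⟨w12⟩ := hA.isConnected x₁ x₂
  obtain ⟨m, hm01, hm02, hm12⟩ := AuxPF.median hA w01.bypass w02.bypass w12.bypass
    w01.bypass_isPath w02.bypass_isPath
  have Hw01 : ∀ w : A.Walk x₀ x₁, m ∈ w.support := fun w =>
    AuxPF.path_support_subset_walk hA _ w w01.bypass_isPath hm01
  have Hw02 : ∀ w : A.Walk x₀ x₂, m ∈ w.support := fun w =>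
    AuxPF.path_support_subset_walk hA _ w w02.bypass_isPath hm02
  have Hw12 : ∀ w : A.Walk x₁ x₂, m ∈ w.support := fun w =>
    AuxPF.path_support_subset_walk hA _ w w12.bypass_isPath hm12
  have NS : ∀ (xi xj : α), (∀ w : A.Walk xi xj, m ∈ w.support) →
      ¬ PF.SameComp A m xi xj := by
    intro xi xj Hw hs
    obtain ⟨w, hw⟩ := AuxPF.walk_of_sameComp hs
    exact hw (Hw w)
  have N01 : ¬ PF.SameComp A m x₀ x₁ := NS _ _ Hw01
  have N02 : ¬ PF.SameComp A m x₀ x₂ := NS _ _ Hw02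
  have N12 : ¬ PF.SameComp A m x₁ x₂ := NS _ _ Hw12
  -- the median maps to b
  have hfm : f m = b := by
    by_contra hfm
    have key : ∀ (xi xj : α),
        ¬ PF.SameComp B b (f m) (f xi) → ¬ PF.SameComp B b (f m) (f xj) →
        (∀ w : A.Walk xi xj, m ∈ w.support) → False := by
      intro xi xj hnsi hnsj Hw
      obtain ⟨wij⟩ := hA.isConnected xi xj
      set p := wij.bypass with hpdef
      have hp : p.IsPath := wij.bypass_isPath
      have hmp : m ∈ p.support := Hw p
      set w₁ := p.takeUntil m hmp with hw₁def
      set w₂ := p.dropUntil m hmp with hw₂def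
      have hw₁p : w₁.IsPath := hp.takeUntil hmp
      have hw₂p : w₂.IsPath := hp.dropUntil hmp
      obtain ⟨u, hu, hub⟩ := AuxPF.walk_hits ⟨hsurj, hiff⟩
        (fun h => hnsi (AuxPF.sameComp_symm h)) w₁
      obtain ⟨u', hu', hub'⟩ := AuxPF.walk_hits ⟨hsurj, hiff⟩ hnsj w₂
      have hum : u ≠ m := fun h => hfm (h ▸ hub)
      have hu'm : u' ≠ m := fun h => hfm (h ▸ hub')
      set a := w₁.takeUntil u hu with hadef
      set d := w₂.dropUntil u' hu' with hddef
      have hma : m ∉ a.support := by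
        intro hmem
        have hspec : w₁.support = a.support ++ (w₁.dropUntil u hu).support.tail := by
          conv_lhs => rw [← SimpleGraph.Walk.take_spec w₁ hu]
          rw [SimpleGraph.Walk.support_append]
        have hnd := hw₁p.support_nodup
        rw [hspec] at hnd
        have hdisj := List.disjoint_of_nodup_append hnd
        have hmtail : m ∈ (w₁.dropUntil u hu).support.tail := by
          have hms : m ∈ (w₁.dropUntil u hu).support :=
            SimpleGraph.Walk.end_mem_support _
          rw [SimpleGraph.Walk.support_eq_cons, List.mem_cons] at hms
          rcases hms with h | h
          · exact absurd h.symm hum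
          · exact h
        exact hdisj hmem hmtail
      have hmd : m ∉ d.support := by
        intro hmem
        have hspec : w₂.support = (w₂.takeUntil u' hu').support ++ d.support.tail := by
          conv_lhs => rw [← SimpleGraph.Walk.take_spec w₂ hu']
          rw [SimpleGraph.Walk.support_append]
        have hnd := hw₂p.support_nodup
        rw [hspec] at hnd
        have hdisj := List.disjoint_of_nodup_append hnd
        have hmtail : m ∈ d.support.tail := by
          rw [SimpleGraph.Walk.support_eq_cons, List.mem_cons] at hmem
          rcases hmem with h | h
          · exact absurd h.symm hu'm
          · exact h
        exact hdisj (SimpleGraph.Walk.start_mem_support _) hmtail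
      obtain ⟨wf, hwf⟩ := AuxPF.fiber_walk hmono (hub.trans hub'.symm)
      have hmwf : m ∉ wf.support := fun hmem => hfm ((hwf m hmem).trans hub)
      have : m ∉ (a.append (wf.append d)).support := by
        rw [SimpleGraph.Walk.mem_support_append_iff,
          SimpleGraph.Walk.mem_support_append_iff]
        push_neg
        exact ⟨hma, hmwf, hmd⟩
      exact this (Hw _)
    -- f m lies in the class of one of the neighbours; use the other two
    rcases hclassB (f m) hfm with hk | hk | hk
    · refine key x₁ x₂ ?_ ?_ Hw12
      · rw [hx₁]
        intro h
        exact AuxPF.neighbors_not_sameComp hB hadj0 hadj1 e01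
          (AuxPF.sameComp_trans (AuxPF.sameComp_symm hk) h)
      · rw [hx₂]
        intro h
        exact AuxPF.neighbors_not_sameComp hB hadj0 hadj2 e02
          (AuxPF.sameComp_trans (AuxPF.sameComp_symm hk) h)
    · refine key x₀ x₂ ?_ ?_ Hw02
      · rw [hx₀]
        intro h
        exact AuxPF.neighbors_not_sameComp hB hadj1 hadj0 e01.symm
          (AuxPF.sameComp_trans (AuxPF.sameComp_symm hk) h)
      · rw [hx₂]
        intro h
        exact AuxPF.neighbors_not_sameComp hB hadj1 hadj2 e12
          (AuxPF.sameComp_trans (AuxPF.sameComp_symm hk) h)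
    · refine key x₀ x₁ ?_ ?_ Hw01
      · rw [hx₀]
        intro h
        exact AuxPF.neighbors_not_sameComp hB hadj2 hadj0 e02.symm
          (AuxPF.sameComp_trans (AuxPF.sameComp_symm hk) h)
      · rw [hx₁]
        intro h
        exact AuxPF.neighbors_not_sameComp hB hadj2 hadj1 e12.symm
          (AuxPF.sameComp_trans (AuxPF.sameComp_symm hk) h)
  -- transferring same-component facts from B to A
  have toX : ∀ (x xi : α), PF.SameComp B b (f x) (f xi) → PF.SameComp A m x xi := by
    intro x xi hs
    obtain ⟨w, hw⟩ := AuxPF.lift_sameComp ⟨hsurj, hiff⟩ hmono hs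
    exact AuxPF.sameComp_of_walk w (fun hmem => hw m hmem hfm)
  -- classification of vertices outside the fiber of b
  have classify : ∀ x : α, f x ≠ b → ∃ xi, (xi = x₀ ∨ xi = x₁ ∨ xi = x₂) ∧
      PF.SameComp B b (f x) (f xi) ∧ PF.SameComp A m x xi := by
    intro x hx
    rcases hclassB (f x) hx with h | h | h
    · rw [← hx₀] at h
      exact ⟨x₀, Or.inl rfl, h, toX _ _ h⟩
    · rw [← hx₁] at h
      exact ⟨x₁, Or.inr (Or.inl rfl), h, toX _ _ h⟩
    · rw [← hx₂] at h
      exact ⟨x₂, Or.inr (Or.inr rfl), h, toX _ _ h⟩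
  -- order of m is exactly 3
  have hxm : ∀ x : α, f x ≠ b → x ≠ m := fun x hx h => hx (h ▸ hfm)
  obtain ⟨c₀, hc₀, hs₀⟩ := AuxPF.exists_neighbor_sameComp hA (hxm x₀ hfx₀)
  obtain ⟨c₁, hc₁, hs₁⟩ := AuxPF.exists_neighbor_sameComp hA (hxm x₁ hfx₁)
  obtain ⟨c₂, hc₂, hs₂⟩ := AuxPF.exists_neighbor_sameComp hA (hxm x₂ hfx₂)
  have hc01 : c₀ ≠ c₁ := by
    rintro rfl
    exact N01 (AuxPF.sameComp_trans hs₀ (AuxPF.sameComp_symm hs₁))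
  have hc02 : c₀ ≠ c₂ := by
    rintro rfl
    exact N02 (AuxPF.sameComp_trans hs₀ (AuxPF.sameComp_symm hs₂))
  have hc12 : c₁ ≠ c₂ := by
    rintro rfl
    exact N12 (AuxPF.sameComp_trans hs₁ (AuxPF.sameComp_symm hs₂))
  have hom : PF.ord A m = 3 := by
    refine le_antisymm (hordA m) ?_
    have hsub : ({c₀, c₁, c₂} : Set α) ⊆ A.neighborSet m := by
      intro c hc
      rcases hc with rfl | rfl | rfl
      · exact hc₀
      · exact hc₁
      · exact hc₂
    have h3' : ({c₀, c₁, c₂} : Set α).ncard = 3 :=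
      Set.ncard_eq_three.mpr ⟨c₀, c₁, c₂, hc01, hc02, hc12, rfl⟩
    have := Set.ncard_le_ncard hsub (Set.toFinite _)
    rw [h3'] at this
    rwa [PF.ord, Nat.card_coe_set_eq]
  -- conclusion
  refine ⟨m, ⟨hfm, ?_, ?_⟩, by rw [hom, hob]⟩
  · rw [hom, hob]
  · intro x y hx hy
    constructor
    · exact fun h => toX x y h
    · intro hxy
      obtain ⟨xi, hi, hBi, hAi⟩ := classify x hx
      obtain ⟨xj, hj, hBj, hAj⟩ := classify y hy
      have hij : PF.SameComp A m xi xj :=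
        AuxPF.sameComp_trans (AuxPF.sameComp_symm hAi) (AuxPF.sameComp_trans hxy hAj)
      have : xi = xj := by
        rcases hi with rfl | rfl | rfl <;> rcases hj with rfl | rfl | rfl
        · rfl
        · exact absurd hij N01
        · exact absurd hij N02
        · exact absurd (AuxPF.sameComp_symm hij) N01
        · rfl
        · exact absurd hij N12
        · exact absurd (AuxPF.sameComp_symm hij) N02
        · exact absurd (AuxPF.sameComp_symm hij) N12
        · rfl
      subst this
      exact AuxPF.sameComp_trans hBi (AuxPF.sameComp_symm hBj)
end

section
/- Let 𝒯 be a projective Fraïssé family of finite trees with monotone epimorphisms that allows splitting edges, let 𝔾 be its projective Fraïssé limit, and let π : 𝔾 → |𝔾| be its topological realization (the edge relation of 𝔾 is an equivalence relation). If p ∈ |𝔾| is a ramification point, i.e. |𝔾|∖{p} has at least three connected components, then π⁻¹(p) is a singleton. -/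
open SimpleGraph

namespace PFProof
open PF

/-! ### General graph and walk lemmas -/

lemma epi_hom {V W : Type*} {B : SimpleGraph W} {A : SimpleGraph V} {f : W → V}
    (h : IsEpi B A f) {b b' : W} (hadj : B.Adj b b') :
    f b = f b' ∨ A.Adj (f b) (f b') := by
  by_cases he : f b = f b'
  · exact Or.inl he
  · exact Or.inr ((h.2 _ _).mpr ⟨he, b, b', rfl, rfl, hadj⟩)

lemma fiber_walk {V W : Type*} {B : SimpleGraph W} {f : W → V}
    (hm : IsMonotone B f) {a : V} {b b' : W} (hb : f b = a) (hb' : f b' = a) :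
    ∃ P : B.Walk b b', ∀ c ∈ P.support, f c = a := by
  have hbm : b ∈ f ⁻¹' {a} := by simp [hb]
  have hbm' : b' ∈ f ⁻¹' {a} := by simp [hb']
  obtain ⟨P⟩ := (hm a).preconnected ⟨b, hbm⟩ ⟨b', hbm'⟩
  let hom : (SimpleGraph.comap (Subtype.val : (f ⁻¹' {a}) → W) B) →g B :=
    ⟨Subtype.val, fun h => h⟩
  refine ⟨P.map hom, ?_⟩
  intro c hc
  rw [SimpleGraph.Walk.support_map, List.mem_map] at hc
  obtain ⟨d, _, rfl⟩ := hc
  exact d.2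

lemma lift_walk {V W : Type*} {B : SimpleGraph W} {A : SimpleGraph V} {f : W → V}
    (hepi : IsEpi B A f) (hm : IsMonotone B f) {a a' : V} (Wk : A.Walk a a') :
    ∀ {b b' : W}, f b = a → f b' = a' →
      ∃ W' : B.Walk b b', (∀ c ∈ W'.support, f c ∈ Wk.support) ∧
        (∀ v ∈ Wk.support, ∃ c ∈ W'.support, f c = v) := by
  induction Wk with
  | nil =>
    intro b b' hb hb'
    obtain ⟨P, hP⟩ := fiber_walk hm hb hb'
    refine ⟨P, fun c hc => ?_, fun v hv => ?_⟩
    · simp [hP c hc]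
    · simp only [SimpleGraph.Walk.support_nil, List.mem_singleton] at hv
      exact ⟨b, P.start_mem_support, by rw [hb, hv]⟩
  | cons h W ih =>
    intro b b' hb hb'
    obtain ⟨hne, c, c₁, hc, hc₁, hcc⟩ := (hepi.2 _ _).mp h
    obtain ⟨W₁', hW₁a, hW₁b⟩ := ih hc₁ hb'
    obtain ⟨P, hP⟩ := fiber_walk hm hb hc
    refine ⟨P.append (SimpleGraph.Walk.cons hcc W₁'), ?_, ?_⟩
    · intro d hd
      rw [SimpleGraph.Walk.mem_support_append_iff] at hd
      rcases hd with hd | hd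
      · rw [hP d hd]; exact SimpleGraph.Walk.start_mem_support _
      · rw [SimpleGraph.Walk.support_cons, List.mem_cons] at hd
        rcases hd with rfl | hd
        · rw [hc]; exact SimpleGraph.Walk.start_mem_support _
        · rw [SimpleGraph.Walk.support_cons, List.mem_cons]
          exact Or.inr (hW₁a d hd)
    · intro t ht
      rw [SimpleGraph.Walk.support_cons, List.mem_cons] at ht
      rcases ht with rfl | ht
      · exact ⟨b, SimpleGraph.Walk.start_mem_support _, hb⟩
      · obtain ⟨d, hd, hfd⟩ := hW₁b t ht
        refine ⟨d, ?_, hfd⟩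
        rw [SimpleGraph.Walk.mem_support_append_iff, SimpleGraph.Walk.support_cons,
          List.mem_cons]
        exact Or.inr (Or.inr hd)

lemma side_dichotomy_aux {V : Type*} {G : SimpleGraph V} {x y : V} (hxy : G.Adj x y) :
    ∀ {v z : V} (_ : G.Walk v z), z = x →
      (∃ W : G.Walk v x, y ∉ W.support) ∨ (∃ W : G.Walk v y, x ∉ W.support) := by
  intro v z W
  induction W with
  | nil =>
    intro heq
    subst heq
    refine Or.inl ⟨SimpleGraph.Walk.nil, ?_⟩
    rw [SimpleGraph.Walk.support_nil, List.mem_singleton]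
    exact hxy.ne'
  | @cons a b c h W ih =>
    intro heq
    rcases ih heq with ⟨Wu, hy⟩ | ⟨Wu, hx⟩
    · by_cases hv : a = y
      · subst hv
        refine Or.inr ⟨SimpleGraph.Walk.nil, ?_⟩
        rw [SimpleGraph.Walk.support_nil, List.mem_singleton]
        exact hxy.ne
      · refine Or.inl ⟨SimpleGraph.Walk.cons h Wu, ?_⟩
        rw [SimpleGraph.Walk.support_cons, List.mem_cons]
        rintro (rfl | hmem)
        exacts [hv rfl, hy hmem]
    · by_cases hv : a = x
      · subst hv
        refine Or.inl ⟨SimpleGraph.Walk.nil, ?_⟩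
        rw [SimpleGraph.Walk.support_nil, List.mem_singleton]
        exact hxy.ne'
      · refine Or.inr ⟨SimpleGraph.Walk.cons h Wu, ?_⟩
        rw [SimpleGraph.Walk.support_cons, List.mem_cons]
        rintro (rfl | hmem)
        exacts [hv rfl, hx hmem]

lemma side_dichotomy {V : Type*} {G : SimpleGraph V} (hconn : G.Connected)
    {x y : V} (hxy : G.Adj x y) (v : V) :
    (∃ W : G.Walk v x, y ∉ W.support) ∨ (∃ W : G.Walk v y, x ∉ W.support) := by
  obtain ⟨W⟩ := hconn.preconnected v x
  exact side_dichotomy_aux hxy W rfl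

lemma not_both_sides {V : Type*} {G : SimpleGraph V} (hac : G.IsAcyclic)
    {x y : V} (hxy : G.Adj x y) {v : V}
    (h1 : ∃ W : G.Walk v x, y ∉ W.support) (h2 : ∃ W : G.Walk v y, x ∉ W.support) :
    False := by
  obtain ⟨W1, hW1⟩ := h1
  obtain ⟨W2, hW2⟩ := h2
  have hbr := (SimpleGraph.isAcyclic_iff_forall_adj_isBridge.mp hac) hxy
  rw [SimpleGraph.isBridge_iff] at hbr
  have h1' : ∀ e ∈ W1.edges, e ∉ ({s(x, y)} : Set (Sym2 V)) := by
    rintro e he rfl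
    exact hW1 (SimpleGraph.Walk.snd_mem_support_of_mem_edges W1 he)
  have h2' : ∀ e ∈ W2.edges, e ∉ ({s(x, y)} : Set (Sym2 V)) := by
    rintro e he rfl
    exact hW2 (SimpleGraph.Walk.fst_mem_support_of_mem_edges W2 he)
  exact hbr ⟨(W1.toDeleteEdges _ h1').reverse.append (W2.toDeleteEdges _ h2')⟩

lemma walk_partition {V : Type*} {G : SimpleGraph V} {s t : Set V}
    (hst : ∀ a ∈ s, ∀ b ∈ t, a ≠ b ∧ ¬G.Adj a b) :
    ∀ {a b : V} (W : G.Walk a b), (∀ c ∈ W.support, c ∈ s ∨ c ∈ t) → a ∈ s →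
      ∀ c ∈ W.support, c ∈ s := by
  intro a b W
  induction W with
  | nil =>
    intro _ ha c hc
    simp only [SimpleGraph.Walk.support_nil, List.mem_singleton] at hc
    exact hc ▸ ha
  | @cons u v w h W ih =>
    intro hcover ha c hc
    have hsub : ∀ d ∈ W.support, d ∈ s ∨ d ∈ t := by
      intro d hd
      apply hcover
      rw [SimpleGraph.Walk.support_cons, List.mem_cons]
      exact Or.inr hd
    have hv : v ∈ s := by
      rcases hsub v W.start_mem_support with hv | hv
      · exact hv
      · exact absurd h (hst u ha v hv).2
    rw [SimpleGraph.Walk.support_cons, List.mem_cons] at hc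
    rcases hc with rfl | hc
    · exact ha
    · exact ih hsub hv c hc

/-! ### Lemmas on the split graph -/

lemma splitMap_castSucc {k : ℕ} (c u : Fin k) : splitMap c u.castSucc = u :=
  Fin.lastCases_castSucc u

lemma splitMap_last {k : ℕ} (c : Fin k) : splitMap c (Fin.last k) = c :=
  Fin.lastCases_last

lemma splitGraph_adj_castSucc {k : ℕ} {A : SimpleGraph (Fin k)} {a b u v : Fin k} :
    (splitGraph A a b).Adj u.castSucc v.castSucc ↔
      A.Adj u v ∧ ¬(u = a ∧ v = b) ∧ ¬(u = b ∧ v = a) := by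
  unfold splitGraph
  rw [SimpleGraph.fromRel_adj]
  constructor
  · rintro ⟨hne, (⟨x', y', hx, hy, hadj, h1, h2⟩ | ⟨hl, -⟩) |
      (⟨x', y', hx, hy, hadj, h1, h2⟩ | ⟨hl, -⟩)⟩
    · obtain rfl := (Fin.castSucc_injective k) hx
      obtain rfl := (Fin.castSucc_injective k) hy
      exact ⟨hadj, h1, h2⟩
    · exact absurd hl (Fin.castSucc_lt_last u).ne
    · obtain rfl := (Fin.castSucc_injective k) hx
      obtain rfl := (Fin.castSucc_injective k) hy
      exact ⟨hadj.symm, fun ⟨e1, e2⟩ => h2 ⟨e2, e1⟩, fun ⟨e1, e2⟩ => h1 ⟨e2, e1⟩⟩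
    · exact absurd hl (Fin.castSucc_lt_last v).ne
  · rintro ⟨hadj, h1, h2⟩
    refine ⟨fun he => hadj.ne ((Fin.castSucc_injective k) he), Or.inl (Or.inl ?_)⟩
    exact ⟨u, v, rfl, rfl, hadj, h1, h2⟩

lemma splitGraph_adj_last {k : ℕ} {A : SimpleGraph (Fin k)} {a b u : Fin k}
    (h : (splitGraph A a b).Adj (Fin.last k) u.castSucc) : u = a ∨ u = b := by
  unfold splitGraph at h
  rw [SimpleGraph.fromRel_adj] at h
  obtain ⟨-, h | h⟩ := h
  · rcases h with ⟨x', y', hx, -, -⟩ | ⟨-, hy | hy⟩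
    · exact absurd hx.symm (Fin.castSucc_lt_last x').ne
    · exact Or.inl ((Fin.castSucc_injective k) hy)
    · exact Or.inr ((Fin.castSucc_injective k) hy)
  · rcases h with ⟨x', y', -, hy, -⟩ | ⟨hl, -⟩
    · exact absurd hy.symm (Fin.castSucc_lt_last y').ne
    · exact absurd hl (Fin.castSucc_lt_last u).ne

lemma walk_castSucc {k : ℕ} {A : SimpleGraph (Fin k)} {a b : Fin k} :
    ∀ {u0 v0 : Fin k} (W : A.Walk u0 v0), b ∉ W.support →
      ∃ W' : (splitGraph A a b).Walk u0.castSucc v0.castSucc,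
        ∀ c ∈ W'.support, ∃ u', u' ∈ W.support ∧ c = u'.castSucc := by
  intro u0 v0 W
  induction W with
  | nil =>
    intro _
    refine ⟨SimpleGraph.Walk.nil, ?_⟩
    intro c hc
    rw [SimpleGraph.Walk.support_nil, List.mem_singleton] at hc
    exact ⟨_, SimpleGraph.Walk.start_mem_support _, hc⟩
  | @cons u v w h W ih =>
    intro hb
    rw [SimpleGraph.Walk.support_cons, List.mem_cons] at hb
    push_neg at hb
    obtain ⟨hbu, hbW⟩ := hb
    obtain ⟨W'', hW''⟩ := ih hbW
    have hvb : v ≠ b := fun he => hbW (he ▸ W.start_mem_support)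
    have hadj : (splitGraph A a b).Adj u.castSucc v.castSucc :=
      splitGraph_adj_castSucc.mpr
        ⟨h, fun ⟨_, hv⟩ => hvb hv, fun ⟨hu, _⟩ => hbu hu.symm⟩
    refine ⟨SimpleGraph.Walk.cons hadj W'', ?_⟩
    intro c hc
    rw [SimpleGraph.Walk.support_cons, List.mem_cons] at hc
    rcases hc with rfl | hc
    · exact ⟨u, SimpleGraph.Walk.start_mem_support _, rfl⟩
    · obtain ⟨u', hu', he⟩ := hW'' c hc
      refine ⟨u', ?_, he⟩
      rw [SimpleGraph.Walk.support_cons, List.mem_cons]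
      exact Or.inr hu'

/-! ### Lemmas on the limit of a Fraïssé sequence -/

section Limit

variable {T : Family} {S : FSeq T}

lemma bond_epi (hT : IsPFF T) (m n : ℕ) (h : n ≤ m) :
    IsEpi (S.F m).graph (S.F n).graph (S.bond m n h) :=
  hT.mor_epi _ _ _ (S.bond_mor m n h)

lemma ne_persist {x y : Limit S} {n m : ℕ} (h : n ≤ m) (hne : x.1 n ≠ y.1 n) :
    x.1 m ≠ y.1 m :=
  fun e => hne (by rw [← x.2 m n h, ← y.2 m n h, e])

lemma exists_ne_coord {x y : Limit S} (h : x ≠ y) : ∃ n, x.1 n ≠ y.1 n := by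
  by_contra hc
  push_neg at hc
  exact h (Subtype.ext (funext hc))

lemma edgeRel_adj {x y : Limit S} (h : EdgeRel S x y) {n : ℕ}
    (hne : x.1 n ≠ y.1 n) : (S.F n).graph.Adj (x.1 n) (y.1 n) :=
  (h n).resolve_left hne

lemma split_package (hT : IsPFF T)
    (hmono : ∀ (A B : FGraph) (f : Fin B.card → Fin A.card), T.mor A B f → IsMonotone B.graph f)
    (hsplit : AllowsSplitting T) (hS : IsFraisseSeq T S)
    {x y : Limit S} (hER : EdgeRel S x y) {n : ℕ} (hxyn : x.1 n ≠ y.1 n) :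
    ∃ (m : ℕ) (_ : n ≤ m) (g : Fin (S.F m).card → Fin ((S.F n).card + 1)),
      IsEpi (S.F m).graph (splitGraph (S.F n).graph (x.1 n) (y.1 n)) g ∧
      IsMonotone (S.F m).graph g ∧
      (∀ w : Limit S, w.1 n ≠ x.1 n → g (w.1 m) = (w.1 n).castSucc) ∧
      g (x.1 m) = Fin.last (S.F n).card := by
  have objn : T.obj (S.F n) := (hT.mor_obj _ _ _ (S.bond_mor n n le_rfl)).1
  have hadj : (S.F n).graph.Adj (x.1 n) (y.1 n) := edgeRel_adj hER hxyn
  obtain ⟨hobjH, hmorA, -⟩ := hsplit (S.F n) (x.1 n) (y.1 n) objn hadj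
  obtain ⟨m, hnm, g, hmorG, hcomm⟩ := hS.extend n _ _ hmorA
  have epiG := hT.mor_epi _ _ _ hmorG
  have monoG := hmono _ _ _ hmorG
  have hsm : ∀ w : Limit S, splitMap (x.1 n) (g (w.1 m)) = w.1 n := by
    intro w
    have h1 := congrFun hcomm (w.1 m)
    rw [Function.comp_apply] at h1
    rw [h1]
    exact w.2 m n hnm
  have hcs : ∀ w : Limit S, w.1 n ≠ x.1 n → g (w.1 m) = (w.1 n).castSucc := by
    intro w hw
    have h1 := hsm w
    rcases Fin.eq_castSucc_or_eq_last (g (w.1 m)) with ⟨u, hu⟩ | hu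
    · rw [hu, splitMap_castSucc] at h1
      rw [hu, h1]
    · rw [hu, splitMap_last] at h1
      exact absurd h1.symm hw
  refine ⟨m, hnm, g, epiG, monoG, hcs, ?_⟩
  rcases Fin.eq_castSucc_or_eq_last (g (x.1 m)) with ⟨u, hu⟩ | hu
  · exfalso
    have h1 := hsm x
    rw [hu, splitMap_castSucc] at h1
    have hym : x.1 m ≠ y.1 m := ne_persist hnm hxyn
    have hadjm : (S.F m).graph.Adj (x.1 m) (y.1 m) := edgeRel_adj hER hym
    have hgy : g (y.1 m) = (y.1 n).castSucc := hcs y (Ne.symm hxyn)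
    rcases epi_hom epiG hadjm with he | hH
    · rw [hu, hgy, h1] at he
      exact hxyn ((Fin.castSucc_injective _) he)
    · rw [hu, hgy, h1] at hH
      exact (splitGraph_adj_castSucc.mp hH).2.1 ⟨rfl, rfl⟩
  · exact hu

lemma partner_unique (hT : IsPFF T)
    (hmono : ∀ (A B : FGraph) (f : Fin B.card → Fin A.card), T.mor A B f → IsMonotone B.graph f)
    (hsplit : AllowsSplitting T) (hS : IsFraisseSeq T S)
    {x y z : Limit S} (hxy : EdgeRel S x y) (hxz : EdgeRel S x z)
    (h1 : x ≠ y) (h2 : x ≠ z) (h3 : y ≠ z) : False := by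
  obtain ⟨n1, hn1⟩ := exists_ne_coord h1
  obtain ⟨n2, hn2⟩ := exists_ne_coord h2
  obtain ⟨n3, hn3⟩ := exists_ne_coord h3
  set n := max n1 (max n2 n3) with hn
  have d1 : x.1 n ≠ y.1 n := ne_persist (le_max_left _ _) hn1
  have d2 : x.1 n ≠ z.1 n := ne_persist (le_trans (le_max_left _ _) (le_max_right _ _)) hn2
  have d3 : y.1 n ≠ z.1 n := ne_persist (le_trans (le_max_right _ _) (le_max_right _ _)) hn3
  obtain ⟨m, hnm, g, epiG, monoG, hcs, hxlast⟩ := split_package hT hmono hsplit hS hxy d1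
  have hzc : g (z.1 m) = (z.1 n).castSucc := hcs z (Ne.symm d2)
  have hxzm : (S.F m).graph.Adj (x.1 m) (z.1 m) := edgeRel_adj hxz (ne_persist hnm d2)
  rcases epi_hom epiG hxzm with he | hH
  · rw [hxlast, hzc] at he
    exact (Fin.castSucc_lt_last (z.1 n)).ne' he
  · rw [hxlast, hzc] at hH
    rcases splitGraph_adj_last hH with h | h
    · exact d2 h.symm
    · exact d3 h.symm

lemma edgeRel_equivalence (hT : IsPFF T)
    (hmono : ∀ (A B : FGraph) (f : Fin B.card → Fin A.card), T.mor A B f → IsMonotone B.graph f)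
    (hsplit : AllowsSplitting T) (hS : IsFraisseSeq T S) :
    Equivalence (EdgeRel S) := by
  refine ⟨fun x n => Or.inl rfl, fun {a b} h n => (h n).imp Eq.symm SimpleGraph.Adj.symm, ?_⟩
  intro a b c hab hbc
  by_cases h1 : a = b
  · rwa [h1]
  by_cases h2 : b = c
  · rwa [← h2]
  by_cases h3 : a = c
  · exact fun n => h3 ▸ Or.inl rfl
  exact absurd (partner_unique hT hmono hsplit hS
    (fun n => (hab n).imp Eq.symm SimpleGraph.Adj.symm) hbc (Ne.symm h1) h2 h3) not_false

lemma class_eq (hT : IsPFF T)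
    (hmono : ∀ (A B : FGraph) (f : Fin B.card → Fin A.card), T.mor A B f → IsMonotone B.graph f)
    (hsplit : AllowsSplitting T) (hS : IsFraisseSeq T S)
    {x y : Limit S} (hxy : EdgeRel S x y) (hne : x ≠ y) :
    ∀ w, Quot.mk (EdgeRel S) w = Quot.mk (EdgeRel S) x → w = x ∨ w = y := by
  intro w h
  have hequiv := edgeRel_equivalence hT hmono hsplit hS
  have hw : EdgeRel S w x := (hequiv.eqvGen_iff).mp (Quot.eqvGen_exact h)
  by_cases h1 : w = x
  · exact Or.inl h1
  by_cases h2 : w = y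
  · exact Or.inr h2
  exact absurd (partner_unique hT hmono hsplit hS (hequiv.symm hw) hxy
    (Ne.symm h1) hne h2) not_false

/-! ### Topological infrastructure on the limit -/

lemma ev_cont (n : ℕ) : Continuous (fun w : Limit S => w.1 n) :=
  (continuous_apply n).comp continuous_subtype_val

lemma limit_compactSpace : CompactSpace (Limit S) := by
  have hcl : IsClosed {f : ∀ n, Fin (S.F n).card |
      ∀ m n (h : n ≤ m), S.bond m n h (f m) = f n} := by
    have heq : {f : ∀ n, Fin (S.F n).card | ∀ m n (h : n ≤ m), S.bond m n h (f m) = f n} =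
        ⋂ (m) (n) (h : n ≤ m), {f : ∀ n, Fin (S.F n).card | S.bond m n h (f m) = f n} := by
      ext f
      simp only [Set.mem_setOf_eq, Set.mem_iInter]
    rw [heq]
    refine isClosed_iInter fun m => isClosed_iInter fun n => isClosed_iInter fun h => ?_
    exact isClosed_eq ((continuous_of_discreteTopology).comp (continuous_apply m))
      (continuous_apply n)
  exact isCompact_iff_compactSpace.mp hcl.isCompact

/-! ### Threads through a coherent family of sets -/

lemma thread (k : ℕ) (Q : ∀ j, Set (Fin (S.F (k + j)).card))
    (hdown : ∀ j, ∀ v ∈ Q (j + 1), S.bond (k + j + 1) (k + j) (Nat.le_succ _) v ∈ Q j)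
    (hup : ∀ j, ∀ v ∈ Q j, ∃ u ∈ Q (j + 1), S.bond (k + j + 1) (k + j) (Nat.le_succ _) u = v)
    (j₀ : ℕ) {v : Fin (S.F (k + j₀)).card} (hv : v ∈ Q j₀) :
    ∃ w : Limit S, w.1 (k + j₀) = v ∧ ∀ j, w.1 (k + j) ∈ Q j := by
  classical
  let u : ∀ j, {t : Fin (S.F (k + (j₀ + j))).card // t ∈ Q (j₀ + j)} := fun j =>
    Nat.rec ⟨v, hv⟩ (fun j prev => ⟨(hup (j₀ + j) prev.1 prev.2).choose,
      (hup (j₀ + j) prev.1 prev.2).choose_spec.1⟩) j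
  have ustep : ∀ j, S.bond (k + (j₀ + j) + 1) (k + (j₀ + j)) (Nat.le_succ _) (u (j + 1)).1
      = (u j).1 := fun j => (hup (j₀ + j) (u j).1 (u j).2).choose_spec.2
  have ucompat : ∀ j' j (h : j ≤ j'),
      S.bond (k + (j₀ + j')) (k + (j₀ + j)) (by omega) (u j').1 = (u j).1 := by
    intro j'
    induction j' with
    | zero =>
      intro j h
      have hj : j = 0 := Nat.le_zero.mp h
      subst hj
      exact S.bond_refl _ _
    | succ j' ih =>
      intro j h
      by_cases hj : j = j' + 1
      · subst hj
        exact S.bond_refl _ _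
      · have hj' : j ≤ j' := by omega
        have hcomp := S.bond_comp (k + (j₀ + (j' + 1))) (k + (j₀ + j')) (k + (j₀ + j))
          (by omega) (by omega) (u (j' + 1)).1
        have hu' : S.bond (k + (j₀ + (j' + 1))) (k + (j₀ + j')) (by omega) (u (j' + 1)).1
            = (u j').1 := ustep j'
        calc S.bond (k + (j₀ + (j' + 1))) (k + (j₀ + j)) (by omega) (u (j' + 1)).1
            = S.bond (k + (j₀ + j')) (k + (j₀ + j)) (by omega)
                (S.bond (k + (j₀ + (j' + 1))) (k + (j₀ + j')) (by omega) (u (j' + 1)).1) :=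
              hcomp.symm
          _ = S.bond (k + (j₀ + j')) (k + (j₀ + j)) (by omega) (u j').1 := by
              rw [hu']
          _ = (u j).1 := ih j hj'
  have qdown : ∀ j' j (h : j ≤ j') (t : Fin (S.F (k + j')).card) (ht : t ∈ Q j'),
      S.bond (k + j') (k + j) (by omega) t ∈ Q j := by
    intro j'
    induction j' with
    | zero =>
      intro j h t ht
      have hj : j = 0 := Nat.le_zero.mp h
      subst hj
      show S.bond (k + 0) (k + 0) le_rfl t ∈ Q 0
      rw [S.bond_refl]
      exact ht
    | succ j' ih =>
      intro j h t ht
      by_cases hj : j = j' + 1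
      · subst hj
        show S.bond (k + (j' + 1)) (k + (j' + 1)) le_rfl t ∈ Q (j' + 1)
        rw [S.bond_refl]
        exact ht
      · have hj' : j ≤ j' := by omega
        have hstep : S.bond (k + j' + 1) (k + j') (Nat.le_succ _) t ∈ Q j' := hdown j' t ht
        have hres := ih j hj' _ hstep
        have hcomp := S.bond_comp (k + (j' + 1)) (k + j') (k + j)
          (by omega) (by omega) t
        exact hcomp ▸ hres
  refine ⟨⟨fun nn => S.bond (k + (j₀ + nn)) nn (by omega) (u nn).1, ?_⟩, ?_, ?_⟩
  · intro m' n' h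
    have h1 : S.bond m' n' h (S.bond (k + (j₀ + m')) m' (by omega) (u m').1)
        = S.bond (k + (j₀ + m')) n' (by omega) (u m').1 :=
      S.bond_comp _ _ _ _ _ _
    have h2 : S.bond (k + (j₀ + n')) n' (by omega) (u n').1
        = S.bond (k + (j₀ + n')) n' (by omega)
            (S.bond (k + (j₀ + m')) (k + (j₀ + n')) (by omega) (u m').1) := by
      rw [ucompat m' n' h]
    have h3 : S.bond (k + (j₀ + n')) n' (by omega)
          (S.bond (k + (j₀ + m')) (k + (j₀ + n')) (by omega) (u m').1)
        = S.bond (k + (j₀ + m')) n' (by omega) (u m').1 :=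
      S.bond_comp _ _ _ _ _ _
    exact h1.trans (h2.trans h3).symm
  · exact ucompat (k + j₀) 0 (Nat.zero_le _)
  · intro j
    exact qdown (j₀ + (k + j)) j (by omega) _ (u (k + j)).2

/-! ### Preconnectedness of the image of a tube of walks -/

lemma preconn (hT : IsPFF T) (k : ℕ) (z z' : Limit S)
    (WW : ∀ j, (S.F (k + j)).graph.Walk (z.1 (k + j)) (z'.1 (k + j)))
    (hdown : ∀ j, ∀ c ∈ (WW (j + 1)).support,
      S.bond (k + j + 1) (k + j) (Nat.le_succ _) c ∈ (WW j).support)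
    (hup : ∀ j, ∀ t ∈ (WW j).support,
      ∃ c ∈ (WW (j + 1)).support, S.bond (k + j + 1) (k + j) (Nat.le_succ _) c = t) :
    IsPreconnected (Quot.mk (EdgeRel S) ''
      {w : Limit S | ∀ j, w.1 (k + j) ∈ (WW j).support}) := by
  set L : Set (Limit S) := {w | ∀ j, w.1 (k + j) ∈ (WW j).support} with hLdef
  rintro uu vv huu hvv hcover ⟨q1, hq1s, hq1u⟩ ⟨q2, hq2s, hq2v⟩
  by_contra hemp
  rw [Set.not_nonempty_iff_eq_empty] at hemp
  have hLclosed : IsClosed L := by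
    have heq : L = ⋂ j, (fun w : Limit S => w.1 (k + j)) ⁻¹' {t | t ∈ (WW j).support} := by
      ext w
      simp only [hLdef, Set.mem_setOf_eq, Set.mem_iInter, Set.mem_preimage]
    rw [heq]
    exact isClosed_iInter fun j => (isClosed_discrete _).preimage (ev_cont _)
  have hdisj : ∀ w ∈ L, ¬(Quot.mk (EdgeRel S) w ∈ uu ∧ Quot.mk (EdgeRel S) w ∈ vv) := by
    rintro w hw ⟨hh1, hh2⟩
    have hmem : Quot.mk (EdgeRel S) w ∈ (Quot.mk (EdgeRel S) '' L) ∩ (uu ∩ vv) :=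
      ⟨Set.mem_image_of_mem _ hw, hh1, hh2⟩
    rw [hemp] at hmem
    exact hmem
  set A : Set (Limit S) := L ∩ Quot.mk (EdgeRel S) ⁻¹' uu with hAdef
  set B : Set (Limit S) := L ∩ Quot.mk (EdgeRel S) ⁻¹' vv with hBdef
  have hABL : ∀ w ∈ L, w ∈ A ∨ w ∈ B := by
    intro w hw
    rcases hcover (Set.mem_image_of_mem _ hw) with h | h
    · exact Or.inl ⟨hw, h⟩
    · exact Or.inr ⟨hw, h⟩
  have hAclosed : IsClosed A := by
    have heq : A = L ∩ (Quot.mk (EdgeRel S) ⁻¹' vv)ᶜ := by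
      ext w
      constructor
      · rintro ⟨hw, hu⟩
        exact ⟨hw, fun hv => hdisj w hw ⟨hu, hv⟩⟩
      · rintro ⟨hw, hv⟩
        rcases hABL w hw with h | h
        · exact h
        · exact absurd h.2 hv
    rw [heq]
    exact hLclosed.inter (hvv.preimage continuous_quot_mk).isClosed_compl
  have hBclosed : IsClosed B := by
    have heq : B = L ∩ (Quot.mk (EdgeRel S) ⁻¹' uu)ᶜ := by
      ext w
      constructor
      · rintro ⟨hw, hv⟩
        exact ⟨hw, fun hu => hdisj w hw ⟨hu, hv⟩⟩
      · rintro ⟨hw, hu⟩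
        rcases hABL w hw with h | h
        · exact absurd h.2 hu
        · exact h
    rw [heq]
    exact hLclosed.inter (huu.preimage continuous_quot_mk).isClosed_compl
  obtain ⟨w1, hw1L, hw1q⟩ := hq1s
  have hw1A : w1 ∈ A := ⟨hw1L, by rw [Set.mem_preimage, hw1q]; exact hq1u⟩
  obtain ⟨w2, hw2L, hw2q⟩ := hq2s
  have hw2B : w2 ∈ B := ⟨hw2L, by rw [Set.mem_preimage, hw2q]; exact hq2v⟩
  haveI := limit_compactSpace (S := S)
  have hcomp : IsCompact (A ×ˢ B) := hAclosed.isCompact.prod hBclosed.isCompact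
  set O : ℕ → Set (Limit S × Limit S) := fun n =>
    {pq | ¬(pq.1.1 n = pq.2.1 n ∨ (S.F n).graph.Adj (pq.1.1 n) (pq.2.1 n))} with hOdef
  have hOopen : ∀ n, IsOpen (O n) := by
    intro n
    have heq : O n = (fun pq : Limit S × Limit S => (pq.1.1 n, pq.2.1 n)) ⁻¹'
        {c : Fin (S.F n).card × Fin (S.F n).card | ¬(c.1 = c.2 ∨ (S.F n).graph.Adj c.1 c.2)} :=
      rfl
    rw [heq]
    exact (((ev_cont n).comp continuous_fst).prodMk
      ((ev_cont n).comp continuous_snd)).isOpen_preimage _ (isOpen_discrete _)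
  have hOmono : ∀ n m, n ≤ m → O n ⊆ O m := by
    intro n m h pq hpq hcon
    apply hpq
    rcases hcon with he | ha
    · left
      rw [← pq.1.2 m n h, ← pq.2.2 m n h, he]
    · rcases epi_hom (bond_epi hT m n h) ha with he | ha'
      · left
        rw [← pq.1.2 m n h, ← pq.2.2 m n h]
        exact he
      · right
        rw [← pq.1.2 m n h, ← pq.2.2 m n h]
        exact ha'
  have hcoverO : (A ×ˢ B) ⊆ ⋃ n, O n := by
    rintro ⟨w, w'⟩ hmem
    rw [Set.mem_prod] at hmem
    obtain ⟨hwA, hw'B⟩ := hmem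
    have hnE : ¬ EdgeRel S w w' := by
      intro hE
      have heq : Quot.mk (EdgeRel S) w = Quot.mk (EdgeRel S) w' := Quot.sound hE
      exact hdisj w hwA.1 ⟨hwA.2, by rw [heq]; exact hw'B.2⟩
    obtain ⟨n, hn⟩ := not_forall.mp hnE
    exact Set.mem_iUnion.mpr ⟨n, hn⟩
  obtain ⟨ns, hns⟩ := hcomp.elim_directed_cover O hOopen hcoverO
    (fun i j => ⟨max i j, hOmono _ _ (le_max_left _ _), hOmono _ _ (le_max_right _ _)⟩)
  have hsep : ∀ w ∈ A, ∀ w' ∈ B, w.1 (k + ns) ≠ w'.1 (k + ns) ∧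
      ¬ (S.F (k + ns)).graph.Adj (w.1 (k + ns)) (w'.1 (k + ns)) := by
    intro w hw w' hw'
    have hmm : (w, w') ∈ A ×ˢ B := Set.mem_prod.mpr ⟨hw, hw'⟩
    have hmem := hOmono ns (k + ns) (Nat.le_add_left _ _) (hns hmm)
    exact ⟨fun h => hmem (Or.inl h), fun h => hmem (Or.inr h)⟩
  set s1 : Set (Fin (S.F (k + ns)).card) := {d | ∃ w ∈ A, w.1 (k + ns) = d} with hs1def
  set t1 : Set (Fin (S.F (k + ns)).card) := {d | ∃ w ∈ B, w.1 (k + ns) = d} with ht1def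
  have hst : ∀ a ∈ s1, ∀ b ∈ t1, a ≠ b ∧ ¬(S.F (k + ns)).graph.Adj a b := by
    rintro a ⟨w, hw, rfl⟩ b ⟨w', hw', rfl⟩
    exact hsep w hw w' hw'
  have hcoverS : ∀ c ∈ (WW ns).support, c ∈ s1 ∨ c ∈ t1 := by
    intro c hc
    obtain ⟨w, hwN, hwL⟩ := thread k (fun j => {t | t ∈ (WW j).support}) hdown hup ns hc
    rcases hABL w hwL with h | h
    · exact Or.inl ⟨w, h, hwN⟩
    · exact Or.inr ⟨w, h, hwN⟩
  have hzL : z ∈ L := fun j => (WW j).start_mem_support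
  rcases hABL z hzL with hzA | hzB
  · have hall := walk_partition hst (WW ns) hcoverS ⟨z, hzA, rfl⟩
    have hh1 : w2.1 (k + ns) ∈ s1 := hall _ (hw2L ns)
    have hh2 : w2.1 (k + ns) ∈ t1 := ⟨w2, hw2B, rfl⟩
    exact (hst _ hh1 _ hh2).1 rfl
  · have hst' : ∀ a ∈ t1, ∀ b ∈ s1, a ≠ b ∧ ¬(S.F (k + ns)).graph.Adj a b :=
      fun a ha b hb => ⟨(hst b hb a ha).1.symm, fun h => (hst b hb a ha).2 h.symm⟩
    have hall := walk_partition hst' (WW ns) (fun c hc => (hcoverS c hc).symm)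
      ⟨z, hzB, rfl⟩
    have hh1 : w1.1 (k + ns) ∈ t1 := hall _ (hw1L ns)
    have hh2 : w1.1 (k + ns) ∈ s1 := ⟨w1, hw1A, rfl⟩
    exact (hst _ hh2 _ hh1).1 rfl

/-! ### Two points on the same side of an edge lie in a common preconnected set -/

lemma same_side_preconn (hT : IsPFF T)
    (htree : ∀ A : FGraph, T.obj A → A.graph.IsTree)
    (hmono : ∀ (A B : FGraph) (f : Fin B.card → Fin A.card), T.mor A B f → IsMonotone B.graph f)
    (hsplit : AllowsSplitting T) (hS : IsFraisseSeq T S)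
    {x y z z' : Limit S} (hER : EdgeRel S x y)
    (hca : ∀ w, Quot.mk (EdgeRel S) w = Quot.mk (EdgeRel S) x → w = x ∨ w = y)
    (n₁ : ℕ)
    (hxy : ∀ n, n₁ ≤ n → x.1 n ≠ y.1 n)
    (hzx : ∀ n, n₁ ≤ n → z.1 n ≠ x.1 n)
    (hz'x : ∀ n, n₁ ≤ n → z'.1 n ≠ x.1 n)
    (hXz : ∀ n, n₁ ≤ n → ∃ W : (S.F n).graph.Walk (z.1 n) (x.1 n), y.1 n ∉ W.support)
    (hXz' : ∀ n, n₁ ≤ n → ∃ W : (S.F n).graph.Walk (z'.1 n) (x.1 n), y.1 n ∉ W.support) :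
    ∃ s : Set (Realization S), IsPreconnected s ∧ Quot.mk (EdgeRel S) z ∈ s ∧
      Quot.mk (EdgeRel S) z' ∈ s ∧ Quot.mk (EdgeRel S) x ∉ s := by
  classical
  have objk : ∀ nn : ℕ, T.obj (S.F nn) :=
    fun nn => (hT.mor_obj _ _ _ (S.bond_mor nn nn le_rfl)).1
  by_cases hc : ∃ k, n₁ ≤ k ∧ ∃ W : (S.F k).graph.Walk (z.1 k) (z'.1 k), x.1 k ∉ W.support
  · obtain ⟨k, hk, W₀, hW₀x⟩ := hc
    have hadjk : (S.F k).graph.Adj (x.1 k) (y.1 k) := (hER k).resolve_left (hxy k hk)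
    have hW₀y : y.1 k ∉ W₀.support := by
      intro hy
      refine not_both_sides (htree _ (objk k)).2 hadjk (hXz k hk)
        ⟨W₀.takeUntil (y.1 k) hy, ?_⟩
      intro hx'
      exact hW₀x (SimpleGraph.Walk.support_takeUntil_subset _ _ hx')
    have lift : ∀ j (Wj : (S.F (k + j)).graph.Walk (z.1 (k + j)) (z'.1 (k + j))),
        ∃ W' : (S.F (k + j + 1)).graph.Walk (z.1 (k + j + 1)) (z'.1 (k + j + 1)),
          (∀ c ∈ W'.support, S.bond (k + j + 1) (k + j) (Nat.le_succ _) c ∈ Wj.support) ∧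
          (∀ t ∈ Wj.support, ∃ c ∈ W'.support, S.bond (k + j + 1) (k + j) (Nat.le_succ _) c = t) :=
      fun j Wj => lift_walk (bond_epi hT _ _ _) (hmono _ _ _ (S.bond_mor _ _ _)) Wj
        (z.2 _ _ _) (z'.2 _ _ _)
    let WW : ∀ j, (S.F (k + j)).graph.Walk (z.1 (k + j)) (z'.1 (k + j)) := fun j =>
      Nat.rec W₀ (fun j Wj => (lift j Wj).choose) j
    have hdown : ∀ j, ∀ c ∈ (WW (j + 1)).support,
        S.bond (k + j + 1) (k + j) (Nat.le_succ _) c ∈ (WW j).support :=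
      fun j => (lift j (WW j)).choose_spec.1
    have hup : ∀ j, ∀ t ∈ (WW j).support,
        ∃ c ∈ (WW (j + 1)).support, S.bond (k + j + 1) (k + j) (Nat.le_succ _) c = t :=
      fun j => (lift j (WW j)).choose_spec.2
    refine ⟨Quot.mk (EdgeRel S) '' {w : Limit S | ∀ j, w.1 (k + j) ∈ (WW j).support},
      preconn hT k z z' WW hdown hup, ?_, ?_, ?_⟩
    · exact Set.mem_image_of_mem _ (fun j => (WW j).start_mem_support)
    · exact Set.mem_image_of_mem _ (fun j => (WW j).end_mem_support)
    · rintro ⟨w, hwL, hwq⟩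
      rcases hca w hwq with rfl | rfl
      · exact hW₀x (hwL 0)
      · exact hW₀y (hwL 0)
  · exfalso
    push_neg at hc
    obtain ⟨m, hnm, g, epiG, monoG, hcs, hxlast⟩ :=
      split_package hT hmono hsplit hS hER (hxy n₁ le_rfl)
    obtain ⟨W₁, hW₁⟩ := hXz n₁ le_rfl
    obtain ⟨W₂, hW₂⟩ := hXz' n₁ le_rfl
    set U := W₁.append W₂.reverse with hUdef
    have hUy : y.1 n₁ ∉ U.support := by
      rw [hUdef]
      intro hmem
      rw [SimpleGraph.Walk.mem_support_append_iff] at hmem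
      rcases hmem with hmem | hmem
      · exact hW₁ hmem
      · rw [SimpleGraph.Walk.support_reverse, List.mem_reverse] at hmem
        exact hW₂ hmem
    obtain ⟨W', hW'⟩ := walk_castSucc U hUy
    obtain ⟨Wm, hWm, -⟩ := lift_walk epiG monoG W' (hcs z (hzx n₁ le_rfl))
      (hcs z' (hz'x n₁ le_rfl))
    have hxm : x.1 m ∈ Wm.support := hc m hnm Wm
    have hlast := hWm _ hxm
    rw [hxlast] at hlast
    obtain ⟨u', -, hu'⟩ := hW' _ hlast
    exact (Fin.castSucc_lt_last u').ne' hu'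

/-! ### Assigning a side to every point distinct from the edge -/

lemma side_mono (hT : IsPFF T)
    (hmono : ∀ (A B : FGraph) (f : Fin B.card → Fin A.card), T.mor A B f → IsMonotone B.graph f)
    {z P Q : Limit S} {n m : ℕ} (h : n ≤ m)
    (hside : ∃ W : (S.F n).graph.Walk (z.1 n) (P.1 n), Q.1 n ∉ W.support) :
    ∃ W : (S.F m).graph.Walk (z.1 m) (P.1 m), Q.1 m ∉ W.support := by
  obtain ⟨W, hW⟩ := hside
  obtain ⟨W', hW'a, -⟩ := lift_walk (bond_epi hT m n h) (hmono _ _ _ (S.bond_mor m n h)) W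
    (z.2 m n h) (P.2 m n h)
  refine ⟨W', fun hy => hW ?_⟩
  have := hW'a _ hy
  rwa [Q.2 m n h] at this

lemma side_assign (hT : IsPFF T)
    (htree : ∀ A : FGraph, T.obj A → A.graph.IsTree)
    (hmono : ∀ (A B : FGraph) (f : Fin B.card → Fin A.card), T.mor A B f → IsMonotone B.graph f)
    {x y z : Limit S} (hER : EdgeRel S x y) (hxy : x ≠ y) (hzx : z ≠ x) (hzy : z ≠ y) :
    ∃ N, (∀ n, N ≤ n → ∃ W : (S.F n).graph.Walk (z.1 n) (x.1 n), y.1 n ∉ W.support) ∨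
         (∀ n, N ≤ n → ∃ W : (S.F n).graph.Walk (z.1 n) (y.1 n), x.1 n ∉ W.support) := by
  obtain ⟨n1, hn1⟩ := exists_ne_coord hxy
  have objn : T.obj (S.F n1) := (hT.mor_obj _ _ _ (S.bond_mor n1 n1 le_rfl)).1
  have hadj : (S.F n1).graph.Adj (x.1 n1) (y.1 n1) := edgeRel_adj hER hn1
  rcases side_dichotomy (htree _ objn).1 hadj (z.1 n1) with h | h
  · exact ⟨n1, Or.inl (fun n hn => side_mono hT hmono hn h)⟩
  · exact ⟨n1, Or.inr (fun n hn => side_mono hT hmono hn h)⟩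

/-! ### Points on the same side lie in the same connected component -/

lemma comp_eq (hT : IsPFF T)
    (htree : ∀ A : FGraph, T.obj A → A.graph.IsTree)
    (hmono : ∀ (A B : FGraph) (f : Fin B.card → Fin A.card), T.mor A B f → IsMonotone B.graph f)
    (hsplit : AllowsSplitting T) (hS : IsFraisseSeq T S)
    {x y z z' : Limit S} {p : Realization S}
    (hER : EdgeRel S x y) (hne : x ≠ y)
    (hca : ∀ w, Quot.mk (EdgeRel S) w = Quot.mk (EdgeRel S) x → w = x ∨ w = y)
    (hpx : Quot.mk (EdgeRel S) x = p)
    (hznx : z ≠ x) (hz'nx : z' ≠ x)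
    {N N' : ℕ}
    (hXz : ∀ n, N ≤ n → ∃ W : (S.F n).graph.Walk (z.1 n) (x.1 n), y.1 n ∉ W.support)
    (hXz' : ∀ n, N' ≤ n → ∃ W : (S.F n).graph.Walk (z'.1 n) (x.1 n), y.1 n ∉ W.support)
    (q q' : {r : Realization S // r ≠ p})
    (hq : q.1 = Quot.mk (EdgeRel S) z) (hq' : q'.1 = Quot.mk (EdgeRel S) z') :
    ConnectedComponents.mk q = ConnectedComponents.mk q' := by
  obtain ⟨m1, hm1⟩ := exists_ne_coord hne
  obtain ⟨m2, hm2⟩ := exists_ne_coord hznx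
  obtain ⟨m3, hm3⟩ := exists_ne_coord hz'nx
  set n₁ := max (max N N') (max m1 (max m2 m3)) with hn₁def
  obtain ⟨s, hspre, hzs, hz's, hxs⟩ := same_side_preconn hT htree hmono hsplit hS hER hca n₁
    (fun n hn => ne_persist (le_trans (le_trans (le_max_left _ _) (le_max_right _ _)) hn) hm1)
    (fun n hn => ne_persist (le_trans (le_trans (le_trans (le_max_left _ _) (le_max_right _ _))
      (le_max_right _ _)) hn) hm2)
    (fun n hn => ne_persist (le_trans (le_trans (le_trans (le_max_right _ _) (le_max_right _ _))
      (le_max_right _ _)) hn) hm3)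
    (fun n hn => hXz n (le_trans (le_trans (le_max_left _ _) (le_max_left _ _)) hn))
    (fun n hn => hXz' n (le_trans (le_trans (le_max_right _ _) (le_max_left _ _)) hn))
  have hsub : s ⊆ {r : Realization S | r ≠ p} := by
    intro r hr he
    apply hxs
    rw [hpx, ← he]
    exact hr
  set s' : Set {r : Realization S // r ≠ p} := Subtype.val ⁻¹' s with hs'def
  have himg : Subtype.val '' s' = s := by
    apply Set.image_preimage_eq_iff.mpr
    rw [Subtype.range_coe_subtype]
    exact hsub
  have hpre' : IsPreconnected s' :=
    (Topology.IsInducing.subtypeVal.isPreconnected_image).mp (himg ▸ hspre)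
  have hqm : q ∈ s' := by
    rw [hs'def, Set.mem_preimage, hq]
    exact hzs
  have hq'm : q' ∈ s' := by
    rw [hs'def, Set.mem_preimage, hq']
    exact hz's
  have hcc : q' ∈ connectedComponent q := hpre'.subset_connectedComponent hqm hq'm
  exact ConnectedComponents.coe_eq_coe.mpr (connectedComponent_eq hcc)

end Limit

/-! ### Counting lemma -/

lemma three_distinct {α : Type} [TopologicalSpace α] (h : 3 ≤ ENat.card α) :
    ∃ a b c : α, a ≠ b ∧ a ≠ c ∧ b ≠ c := by
  classical
  by_contra hcon
  push_neg at hcon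
  rcases isEmpty_or_nonempty α with he | ⟨⟨a₀⟩⟩
  · rw [ENat.card_eq_coe_natCard, Nat.card_of_isEmpty] at h
    norm_num at h
  · have hinj : ∃ f : α → Fin 2, Function.Injective f := by
      by_cases hall : ∀ b : α, b = a₀
      · exact ⟨fun _ => 0, fun u v _ => (hall u).trans (hall v).symm⟩
      · push_neg at hall
        obtain ⟨a₁, ha₁⟩ := hall
        have hdich : ∀ c : α, c = a₀ ∨ c = a₁ := by
          intro c
          by_cases h0 : c = a₀
          · exact Or.inl h0
          by_cases h1 : c = a₁
          · exact Or.inr h1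
          exact absurd (hcon a₀ a₁ c (fun e => ha₁ e.symm) (fun e => h0 e.symm)).symm h1
        refine ⟨fun c => if c = a₀ then (0 : Fin 2) else 1, ?_⟩
        intro u v huv
        dsimp only at huv
        by_cases hu : u = a₀ <;> by_cases hv : v = a₀
        · rw [hu, hv]
        · rw [if_pos hu, if_neg hv] at huv
          exact absurd huv (by decide)
        · rw [if_neg hu, if_pos hv] at huv
          exact absurd huv (by decide)
        · rw [(hdich u).resolve_left hu, (hdich v).resolve_left hv]
    obtain ⟨f, hf⟩ := hinj
    haveI := Finite.of_injective f hf
    rw [ENat.card_eq_coe_natCard] at h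
    have h2 : Nat.card α ≤ Nat.card (Fin 2) := Nat.card_le_card_of_injective f hf
    have h4 : Nat.card (Fin 2) = 2 := by rw [Nat.card_eq_fintype_card, Fintype.card_fin]
    rw [h4] at h2
    have h3 : (3 : ℕ∞) ≤ (2 : ℕ) := le_trans h (by exact_mod_cast h2)
    norm_num at h3

end PFProof


/-- Let `𝒯` be a projective Fraïssé family of finite trees with monotone
epimorphisms that allows splitting edges, let `𝔾` be its projective Fraïssé limit and
`π : 𝔾 → |𝔾|` its topological realization.  If `p ∈ |𝔾|` is a ramification point,
i.e. `|𝔾| ∖ {p}` has at least three connected components, then `π⁻¹(p)` is a singleton. -/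
theorem unique_preimage_of_ramification (T : PF.Family) (hT : PF.IsPFF T)
    (htree : ∀ A : PF.FGraph, T.obj A → A.graph.IsTree)
    (hmono : ∀ (A B : PF.FGraph) (f : Fin B.card → Fin A.card),
      T.mor A B f → PF.IsMonotone B.graph f)
    (hsplit : PF.AllowsSplitting T)
    (S : PF.FSeq T) (hS : PF.IsFraisseSeq T S)
    (p : PF.Realization S) (hp : 3 ≤ PF.ordAt (PF.Realization S) p) :
    ∃! x : PF.Limit S, PF.realMap S x = p := by
    classical
  obtain ⟨x, hx⟩ := Quot.exists_rep p
  refine ⟨x, hx, ?_⟩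
  intro y hy
  by_contra hne0
  have hxyq : Quot.mk (PF.EdgeRel S) y = Quot.mk (PF.EdgeRel S) x := hy.trans hx.symm
  have hequiv := PFProof.edgeRel_equivalence hT hmono hsplit hS
  have hER : PF.EdgeRel S x y := hequiv.symm (hequiv.eqvGen_iff.mp (Quot.eqvGen_exact hxyq))
  have hne : x ≠ y := fun h => hne0 h.symm
  have hca := PFProof.class_eq hT hmono hsplit hS hER hne
  have hpx : Quot.mk (PF.EdgeRel S) x = p := hx
  have hpy : Quot.mk (PF.EdgeRel S) y = p := hy
  have hca' : ∀ w, Quot.mk (PF.EdgeRel S) w = Quot.mk (PF.EdgeRel S) y → w = y ∨ w = x := by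
    intro w hw
    rcases hca w (hw.trans (hpy.trans hpx.symm)) with h | h
    · exact Or.inr h
    · exact Or.inl h
  rw [PF.ordAt] at hp
  obtain ⟨c1, c2, c3, h12, h13, h23⟩ := PFProof.three_distinct hp
  obtain ⟨q1, hc1⟩ := ConnectedComponents.surjective_coe c1
  obtain ⟨q2, hc2⟩ := ConnectedComponents.surjective_coe c2
  obtain ⟨q3, hc3⟩ := ConnectedComponents.surjective_coe c3
  obtain ⟨z1, hz1⟩ := Quot.exists_rep q1.1
  obtain ⟨z2, hz2⟩ := Quot.exists_rep q2.1
  obtain ⟨z3, hz3⟩ := Quot.exists_rep q3.1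
  have hz1x : z1 ≠ x := fun h => q1.2 (by rw [← hz1, h]; exact hpx)
  have hz1y : z1 ≠ y := fun h => q1.2 (by rw [← hz1, h]; exact hpy)
  have hz2x : z2 ≠ x := fun h => q2.2 (by rw [← hz2, h]; exact hpx)
  have hz2y : z2 ≠ y := fun h => q2.2 (by rw [← hz2, h]; exact hpy)
  have hz3x : z3 ≠ x := fun h => q3.2 (by rw [← hz3, h]; exact hpx)
  have hz3y : z3 ≠ y := fun h => q3.2 (by rw [← hz3, h]; exact hpy)
  obtain ⟨N1, hs1⟩ := PFProof.side_assign hT htree hmono hER hne hz1x hz1y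
  obtain ⟨N2, hs2⟩ := PFProof.side_assign hT htree hmono hER hne hz2x hz2y
  obtain ⟨N3, hs3⟩ := PFProof.side_assign hT htree hmono hER hne hz3x hz3y
  have pairX : ∀ (z z' : PF.Limit S), z ≠ x → z' ≠ x →
      ∀ {N N' : ℕ},
      (∀ n, N ≤ n → ∃ W : (S.F n).graph.Walk (z.1 n) (x.1 n), y.1 n ∉ W.support) →
      (∀ n, N' ≤ n → ∃ W : (S.F n).graph.Walk (z'.1 n) (x.1 n), y.1 n ∉ W.support) →
      ∀ (q q' : {r : PF.Realization S // r ≠ p}),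
        q.1 = Quot.mk (PF.EdgeRel S) z → q'.1 = Quot.mk (PF.EdgeRel S) z' →
      ConnectedComponents.mk q = ConnectedComponents.mk q' :=
    fun z z' hz hz' _ _ hXa hXb q q' hq hq' =>
      PFProof.comp_eq hT htree hmono hsplit hS hER hne hca hpx hz hz' hXa hXb q q' hq hq'
  have pairY : ∀ (z z' : PF.Limit S), z ≠ y → z' ≠ y →
      ∀ {N N' : ℕ},
      (∀ n, N ≤ n → ∃ W : (S.F n).graph.Walk (z.1 n) (y.1 n), x.1 n ∉ W.support) →
      (∀ n, N' ≤ n → ∃ W : (S.F n).graph.Walk (z'.1 n) (y.1 n), x.1 n ∉ W.support) →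
      ∀ (q q' : {r : PF.Realization S // r ≠ p}),
        q.1 = Quot.mk (PF.EdgeRel S) z → q'.1 = Quot.mk (PF.EdgeRel S) z' →
      ConnectedComponents.mk q = ConnectedComponents.mk q' :=
    fun z z' hz hz' _ _ hXa hXb q q' hq hq' =>
      PFProof.comp_eq hT htree hmono hsplit hS (hequiv.symm hER) (Ne.symm hne) hca' hpy
        hz hz' hXa hXb q q' hq hq'
  rcases hs1 with h1 | h1 <;> rcases hs2 with h2 | h2 <;> rcases hs3 with h3 | h3
  · exact h12 ((hc1.symm.trans (pairX z1 z2 hz1x hz2x h1 h2 q1 q2 hz1.symm hz2.symm)).trans hc2)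
  · exact h12 ((hc1.symm.trans (pairX z1 z2 hz1x hz2x h1 h2 q1 q2 hz1.symm hz2.symm)).trans hc2)
  · exact h13 ((hc1.symm.trans (pairX z1 z3 hz1x hz3x h1 h3 q1 q3 hz1.symm hz3.symm)).trans hc3)
  · exact h23 ((hc2.symm.trans (pairY z2 z3 hz2y hz3y h2 h3 q2 q3 hz2.symm hz3.symm)).trans hc3)
  · exact h23 ((hc2.symm.trans (pairX z2 z3 hz2x hz3x h2 h3 q2 q3 hz2.symm hz3.symm)).trans hc3)
  · exact h13 ((hc1.symm.trans (pairY z1 z3 hz1y hz3y h1 h3 q1 q3 hz1.symm hz3.symm)).trans hc3)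
  · exact h12 ((hc1.symm.trans (pairY z1 z2 hz1y hz2y h1 h2 q1 q2 hz1.symm hz2.symm)).trans hc2)
  · exact h12 ((hc1.symm.trans (pairY z1 z2 hz1y hz2y h1 h2 q1 q2 hz1.symm hz2.symm)).trans hc2)
end

section
/- Let 𝒯 be a projective Fraïssé family of finite trees with monotone epimorphisms that allows splitting edges, let ⟨G_i⟩ with epimorphisms f^m_n : G_m → G_n be a Fraïssé sequence for 𝒯, let 𝔾 = lim← G_i be the projective Fraïssé limit and π : 𝔾 → |𝔾| its topological realization. Then π maps every point of weak coherence of 𝔾 ⊆ ∏ G_i to a ramification point of |𝔾|, i.e. a point p such that |𝔾|∖{p} has at least three connected components. -/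
open SimpleGraph

namespace PF

/-! ### Auxiliary lemmas -/

section AuxGeneric

variable {V W : Type*} {A : SimpleGraph V} {B : SimpleGraph W}

theorem sameComp_refl {T : SimpleGraph V} {a x : V} (h : x ≠ a) :
    SameComp T a x x := ⟨h, h, SimpleGraph.Reachable.refl _⟩

theorem sameComp_symm {T : SimpleGraph V} {a x y : V}
    (h : SameComp T a x y) : SameComp T a y x := by
  obtain ⟨hx, hy, hr⟩ := h; exact ⟨hy, hx, hr.symm⟩

theorem sameComp_trans {T : SimpleGraph V} {a x y z : V}
    (h : SameComp T a x y) (h' : SameComp T a y z) : SameComp T a x z := by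
  obtain ⟨hx, hy, hr⟩ := h; obtain ⟨hy', hz, hr'⟩ := h'
  exact ⟨hx, hz, hr.trans hr'⟩

theorem sameComp_ne_left {T : SimpleGraph V} {a x y : V}
    (h : SameComp T a x y) : x ≠ a := h.1

theorem sameComp_of_adj {T : SimpleGraph V} {a x y : V}
    (h : T.Adj x y) (hx : x ≠ a) (hy : y ≠ a) : SameComp T a x y :=
  ⟨hx, hy, SimpleGraph.Adj.reachable (show (del T a).Adj ⟨x, hx⟩ ⟨y, hy⟩ from h)⟩

/-- Distinct neighbours of a vertex of a tree lie in distinct components. -/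
theorem not_sameComp_of_adj_adj {T : SimpleGraph V} (ht : T.IsTree)
    {a x y : V} (hx : T.Adj a x) (hy : T.Adj a y) (hne : x ≠ y) :
    ¬ SameComp T a x y := by
  classical
  rintro ⟨hxa, hya, hr⟩
  obtain ⟨w⟩ := hr
  let w' : T.Walk x y := (w.map (SimpleGraph.Hom.comap Subtype.val T))
  have hsupp : ∀ v ∈ w'.support, v ≠ a := by
    intro v hv
    replace hv := Eq.mp (congrArg (v ∈ ·) (SimpleGraph.Walk.support_map
      (G := SimpleGraph.comap Subtype.val T) (SimpleGraph.Hom.comap Subtype.val T) w)) hv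
    obtain ⟨u, _, rfl⟩ := List.mem_map.mp hv
    exact u.2
  have hp2 : a ∉ w'.bypass.support := fun h =>
    (hsupp a (SimpleGraph.Walk.support_bypass_subset _ h)) rfl
  have hp1adj : T.Adj x a := hx.symm
  have hp1 : (SimpleGraph.Walk.cons hp1adj (SimpleGraph.Walk.cons hy SimpleGraph.Walk.nil)).IsPath := by
    simp only [SimpleGraph.Walk.isPath_def, SimpleGraph.Walk.support_cons,
      SimpleGraph.Walk.support_nil]
    simp only [List.nodup_cons, List.mem_cons, List.mem_singleton, List.not_mem_nil,
      or_false, List.nodup_nil, and_true]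
    refine ⟨?_, ⟨fun h => hy.ne h, not_false⟩⟩
    rintro (h | h)
    · exact hxa h
    · exact hne h
  have huniq := (SimpleGraph.isAcyclic_iff_path_unique.mp ht.2)
    (p := ⟨_, hp1⟩) (q := ⟨w'.bypass, SimpleGraph.Walk.bypass_isPath w'⟩)
  have : a ∈ w'.bypass.support := by
    have h2 := congrArg (fun p : T.Path x y => a ∈ (p : T.Walk x y).support) huniq
    simp only [eq_iff_iff] at h2
    exact h2.mp (by simp)
  exact hp2 this

theorem IsEpi.adj_map {f : W → V} (h : IsEpi B A f) {b b' : W} (hadj : B.Adj b b') :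
    f b = f b' ∨ A.Adj (f b) (f b') := by
  by_cases he : f b = f b'
  · exact Or.inl he
  · exact Or.inr ((h.2 _ _).mpr ⟨he, b, b', rfl, rfl, hadj⟩)

end AuxGeneric

section AuxSplit

variable {k : ℕ}

@[simp] theorem splitMap_castSucc (c : Fin k) (y : Fin k) :
    splitMap c y.castSucc = y := by
  simp [splitMap]

@[simp] theorem splitMap_last (c : Fin k) : splitMap c (Fin.last k) = c := by
  simp [splitMap]

theorem splitMap_eq {c u : Fin k} {z : Fin (k + 1)} (h : splitMap c z = u) (hu : u ≠ c) :
    z = u.castSucc := by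
  induction z using Fin.lastCases with
  | last => rw [splitMap_last] at h; exact absurd h.symm hu
  | cast y => rw [splitMap_castSucc] at h; rw [h]

theorem splitGraph_not_adj_split (A : SimpleGraph (Fin k)) (a b : Fin k) :
    ¬ (splitGraph A a b).Adj a.castSucc b.castSucc := by
  intro h
  rw [splitGraph, SimpleGraph.fromRel_adj] at h
  obtain ⟨hne, h | h⟩ := h
  · rcases h with ⟨x', y', hx, hy, _, h1, h2⟩ | ⟨h, _⟩
    · rw [Fin.castSucc_inj.mp hx, Fin.castSucc_inj.mp hy] at h1
      exact h1 ⟨rfl, rfl⟩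
    · exact (Fin.castSucc_lt_last a).ne h
  · rcases h with ⟨x', y', hx, hy, _, h1, h2⟩ | ⟨h, _⟩
    · rw [Fin.castSucc_inj.mp hx, Fin.castSucc_inj.mp hy] at h2
      exact h2 ⟨rfl, rfl⟩
    · exact (Fin.castSucc_lt_last b).ne h

theorem splitGraph_not_adj_last (A : SimpleGraph (Fin k)) (a b w : Fin k)
    (hwa : w ≠ a) (hwb : w ≠ b) :
    ¬ (splitGraph A a b).Adj (Fin.last k) w.castSucc := by
  intro h
  rw [splitGraph, SimpleGraph.fromRel_adj] at h
  obtain ⟨hne, h | h⟩ := h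
  · rcases h with ⟨x', y', hx, hy, _, _, _⟩ | ⟨_, h | h⟩
    · exact (Fin.castSucc_lt_last x').ne hx.symm
    · exact hwa (Fin.castSucc_inj.mp h)
    · exact hwb (Fin.castSucc_inj.mp h)
  · rcases h with ⟨x', y', hx, hy, _, _, _⟩ | ⟨h, _⟩
    · exact (Fin.castSucc_lt_last y').ne hy.symm
    · exact (Fin.castSucc_lt_last w).ne h

end AuxSplit

section AuxSeq

variable {T : Family} (hT : IsPFF T) (S : FSeq T)

include hT

theorem bond_epi (m n : ℕ) (h : n ≤ m) :
    IsEpi (S.F m).graph (S.F n).graph (S.bond m n h) :=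
  hT.mor_epi _ _ _ (S.bond_mor m n h)

theorem bond_surj (m n : ℕ) (h : n ≤ m) : Function.Surjective (S.bond m n h) :=
  (bond_epi hT S m n h).1

theorem obj_mem (n : ℕ) : T.obj (S.F n) :=
  (hT.mor_obj _ _ _ (S.bond_mor n n le_rfl)).1

/-- A chain of iterated preimages above a vertex `v0` of `S.F k`. -/
noncomputable def repj (k : ℕ) (v0 : Fin (S.F k).card) : ∀ j, Fin (S.F (k + j)).card
  | 0 => v0
  | j + 1 => Function.surjInv (bond_surj hT S (k + j + 1) (k + j) (Nat.le_succ _)) (repj k v0 j)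

theorem repj_bond (k : ℕ) (v0 : Fin (S.F k).card) (j : ℕ) :
    S.bond (k + j + 1) (k + j) (Nat.le_succ _) (repj hT S k v0 (j + 1)) = repj hT S k v0 j :=
  Function.surjInv_eq _ _

theorem repj_bond_le (k : ℕ) (v0 : Fin (S.F k).card) :
    ∀ j j' (h : j' ≤ j),
      S.bond (k + j) (k + j') (Nat.add_le_add_left h k) (repj hT S k v0 j) = repj hT S k v0 j'
  | 0, j', h => by
      cases Nat.le_zero.mp h
      exact S.bond_refl _ _
  | j + 1, j', h => by
      rcases Nat.eq_or_lt_of_le h with rfl | h'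
      · exact S.bond_refl _ _
      · have h'' : j' ≤ j := Nat.lt_succ_iff.mp h'
        calc S.bond (k + (j+1)) (k + j') (Nat.add_le_add_left h k) (repj hT S k v0 (j+1))
            = S.bond (k + j) (k + j') (Nat.add_le_add_left h'' k)
                (S.bond (k + j + 1) (k + j) (Nat.le_succ _) (repj hT S k v0 (j+1))) :=
              (S.bond_comp _ _ _ _ _ _).symm
          _ = S.bond (k + j) (k + j') (Nat.add_le_add_left h'' k) (repj hT S k v0 j) := by
              rw [repj_bond]
          _ = repj hT S k v0 j' := repj_bond_le k v0 j j' h''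

/-- A point of the limit passing through a given vertex at level `m`. -/
noncomputable def liftPoint (m : ℕ) (w : Fin (S.F m).card) : Limit S :=
  ⟨fun l => S.bond (m + l) l (Nat.le_add_left l m) (repj hT S m w l), by
    intro a b hba
    calc S.bond a b hba (S.bond (m + a) a (Nat.le_add_left a m) (repj hT S m w a))
        = S.bond (m + a) b (hba.trans (Nat.le_add_left a m)) (repj hT S m w a) :=
          S.bond_comp _ _ _ _ _ _
      _ = S.bond (m + b) b (Nat.le_add_left b m)
            (S.bond (m + a) (m + b) (Nat.add_le_add_left hba m) (repj hT S m w a)) :=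
          (S.bond_comp _ _ _ _ _ _).symm
      _ = S.bond (m + b) b (Nat.le_add_left b m) (repj hT S m w b) := by
          rw [repj_bond_le hT S m w a b hba]⟩

theorem liftPoint_coord (m : ℕ) (w : Fin (S.F m).card) :
    (liftPoint hT S m w).1 m = w :=
  repj_bond_le hT S m w m 0 (Nat.zero_le m)

omit hT in
theorem edgeRel_refl (y : Limit S) : EdgeRel S y y := fun _ => Or.inl rfl

omit hT in
theorem edgeRel_symm {y z : Limit S} (h : EdgeRel S y z) : EdgeRel S z y :=
  fun n => (h n).imp Eq.symm SimpleGraph.Adj.symm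

theorem edgeRel_trans (hsplit : AllowsSplitting T) (hS : IsFraisseSeq T S)
    {u v w : Limit S} (h1 : EdgeRel S u v) (h2 : EdgeRel S v w) : EdgeRel S u w := by
  by_contra hc
  rw [EdgeRel] at hc
  push_neg at hc
  obtain ⟨n, hne, hnadj⟩ := hc
  have huv : u.1 n ≠ v.1 n := by
    intro he
    rcases h2 n with he' | ha
    · exact hne (he.trans he')
    · exact hnadj (he ▸ ha)
  have hadjuv : (S.F n).graph.Adj (u.1 n) (v.1 n) := (h1 n).resolve_left huv
  have hwv : w.1 n ≠ v.1 n := by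
    intro he
    exact hnadj (he ▸ hadjuv)
  obtain ⟨hobj', hmora, hmorb⟩ := hsplit (S.F n) (u.1 n) (v.1 n) (obj_mem hT S n) hadjuv
  obtain ⟨m, hm, g, hgmor, hcomm⟩ := hS.extend n _ _ hmorb
  have hepi := hT.mor_epi _ _ _ hgmor
  have hbu : splitMap (v.1 n) (g (u.1 m)) = u.1 n := by
    have := congrFun hcomm (u.1 m)
    simp only [Function.comp_apply] at this
    rw [this, u.2]
  have hbw : splitMap (v.1 n) (g (w.1 m)) = w.1 n := by
    have := congrFun hcomm (w.1 m)
    simp only [Function.comp_apply] at this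
    rw [this, w.2]
  have hbv : splitMap (v.1 n) (g (v.1 m)) = v.1 n := by
    have := congrFun hcomm (v.1 m)
    simp only [Function.comp_apply] at this
    rw [this, v.2]
  have hgu : g (u.1 m) = (u.1 n).castSucc := splitMap_eq hbu huv
  have hgw : g (w.1 m) = (w.1 n).castSucc := splitMap_eq hbw hwv
  have huvm : (S.F m).graph.Adj (u.1 m) (v.1 m) := by
    rcases h1 m with he | ha
    · exact absurd (by rw [← u.2 m n hm, he, v.2]) huv
    · exact ha
  have hvwm : (S.F m).graph.Adj (v.1 m) (w.1 m) := by
    rcases h2 m with he | ha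
    · exact absurd (by rw [← w.2 m n hm, ← he, v.2]) (Ne.symm hwv)
    · exact ha
  have hgv : g (v.1 m) = Fin.last (S.F n).card := by
    rcases hepi.adj_map huvm with he | ha
    · exfalso
      rw [hgu] at he
      rw [← he, splitMap_castSucc] at hbv
      exact huv hbv
    · rw [hgu] at ha
      rcases Fin.eq_castSucc_or_eq_last (g (v.1 m)) with ⟨y, hy⟩ | hy
      · rw [hy, splitMap_castSucc] at hbv
        rw [hy, hbv] at ha
        exact absurd ha (splitGraph_not_adj_split _ _ _)
      · exact hy
  rcases hepi.adj_map hvwm with he | ha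
  · rw [hgv, hgw] at he
    exact (Fin.castSucc_lt_last (w.1 n)).ne he.symm
  · rw [hgv, hgw] at ha
    exact splitGraph_not_adj_last _ (u.1 n) (v.1 n) (w.1 n) (Ne.symm hne) hwv ha

end AuxSeq

section AuxMem

variable {T : Family} (hT : IsPFF T) (S : FSeq T) (x : Limit S) (k : ℕ)
  (v0 : Fin (S.F k).card)

/-- `v` is in the component of the chain determined by `v0`. -/
def MemB (j : ℕ) (v : Fin (S.F (k + j)).card) : Prop :=
  SameComp (S.F (k + j)).graph (x.1 (k + j)) v (repj hT S k v0 j)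

/-- Points of the limit eventually in the branch determined by `v0`. -/
def VSet : Set (Limit S) :=
  {y | ∃ j, MemB hT S x k v0 j (y.1 (k + j))}

omit hT in
theorem coord_ne_up {y : Limit S} {n m : ℕ} (h : n ≤ m) (hne : y.1 n ≠ x.1 n) :
    y.1 m ≠ x.1 m := fun he => hne (by rw [← y.2 m n h, he, x.2])

omit hT in
theorem ne_coord {y : Limit S} (h : y ≠ x) : ∃ n, y.1 n ≠ x.1 n := by
  by_contra hc
  push_neg at hc
  exact h (Subtype.ext (funext hc))

variable (hwit : ∀ j : ℕ, IsWeakWitness (S.F (k + j)).graph (S.F (k + j + 1)).graph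
    (S.bond (k + j + 1) (k + j) (Nat.le_succ _)) (x.1 (k + j)) (x.1 (k + j + 1)))
  (h0 : v0 ≠ x.1 k)

include h0

theorem repj_ne : ∀ j, repj hT S k v0 j ≠ x.1 (k + j)
  | 0 => h0
  | j + 1 => fun he => (repj_ne j) (by
      rw [← repj_bond hT S k v0 j, he]; exact x.2 _ _ _)

include hwit

theorem memB_succ_iff (j : ℕ) (w : Fin (S.F (k + j + 1)).card)
    (hwx : S.bond (k + j + 1) (k + j) (Nat.le_succ _) w ≠ x.1 (k + j)) :
    MemB hT S x k v0 j (S.bond (k + j + 1) (k + j) (Nat.le_succ _) w) ↔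
      MemB hT S x k v0 (j + 1) w := by
  have h3 := (hwit j).2.2 w (repj hT S k v0 (j + 1)) hwx
    (by rw [repj_bond]; exact repj_ne hT S x k v0 h0 j)
  rw [repj_bond] at h3
  exact h3

theorem memB_up_iff : ∀ j' j (h : j ≤ j') (w : Fin (S.F (k + j')).card)
    (hwx : S.bond (k + j') (k + j) (Nat.add_le_add_left h k) w ≠ x.1 (k + j)),
    (MemB hT S x k v0 j (S.bond (k + j') (k + j) (Nat.add_le_add_left h k) w) ↔
      MemB hT S x k v0 j' w)
  | 0, j, h, w, hwx => by
      cases Nat.le_zero.mp h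
      rw [S.bond_refl]
  | j' + 1, j, h, w, hwx => by
      rcases Nat.eq_or_lt_of_le h with rfl | h'
      · rw [S.bond_refl]
      · have h'' : j ≤ j' := Nat.lt_succ_iff.mp h'
        have hcomp : S.bond (k + j') (k + j) (Nat.add_le_add_left h'' k)
            (S.bond (k + j' + 1) (k + j') (Nat.le_succ _) w)
            = S.bond (k + (j' + 1)) (k + j) (Nat.add_le_add_left h k) w :=
          S.bond_comp _ _ _ _ _ _
        have hw'x : S.bond (k + j' + 1) (k + j') (Nat.le_succ _) w ≠ x.1 (k + j') := by
          intro he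
          apply hwx
          rw [← hcomp, he, x.2]
        calc MemB hT S x k v0 j (S.bond (k + (j' + 1)) (k + j) (Nat.add_le_add_left h k) w)
            ↔ MemB hT S x k v0 j (S.bond (k + j') (k + j) (Nat.add_le_add_left h'' k)
                (S.bond (k + j' + 1) (k + j') (Nat.le_succ _) w)) := by rw [hcomp]
          _ ↔ MemB hT S x k v0 j' (S.bond (k + j' + 1) (k + j') (Nat.le_succ _) w) :=
              memB_up_iff j' j h'' _ (by rw [hcomp]; exact hwx)
          _ ↔ MemB hT S x k v0 (j' + 1) w := memB_succ_iff hT S x k v0 hwit h0 j' w hw'x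

theorem vset_coord {y : Limit S} (hy : y ∈ VSet hT S x k v0) {j : ℕ}
    (hj : y.1 (k + j) ≠ x.1 (k + j)) : MemB hT S x k v0 j (y.1 (k + j)) := by
  obtain ⟨j0, hj0⟩ := hy
  rcases le_total j j0 with h | h
  · have e : S.bond (k + j0) (k + j) (Nat.add_le_add_left h k) (y.1 (k + j0)) = y.1 (k + j) :=
      y.2 _ _ _
    have := (memB_up_iff hT S x k v0 hwit h0 j0 j h (y.1 (k + j0)) (by rw [e]; exact hj)).mpr hj0
    rw [e] at this
    exact this
  · have e : S.bond (k + j) (k + j0) (Nat.add_le_add_left h k) (y.1 (k + j)) = y.1 (k + j0) :=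
      y.2 _ _ _
    refine (memB_up_iff hT S x k v0 hwit h0 j j0 h (y.1 (k + j)) ?_).mp ?_
    · rw [e]; exact sameComp_ne_left hj0
    · rw [e]; exact hj0

theorem vset_of_edge {y z : Limit S} (hy : y ∈ VSet hT S x k v0) (hyz : EdgeRel S y z)
    (hzx : z ≠ x) : z ∈ VSet hT S x k v0 := by
  obtain ⟨n0, hzn⟩ := ne_coord S x hzx
  obtain ⟨j0, hj0⟩ := hy
  set j := max j0 n0 with hj
  have hzj : z.1 (k + j) ≠ x.1 (k + j) :=
    coord_ne_up S x (le_trans (le_max_right j0 n0) (Nat.le_add_left j k)) hzn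
  have hyj : y.1 (k + j) ≠ x.1 (k + j) :=
    coord_ne_up S x (Nat.add_le_add_left (le_max_left j0 n0) k) (sameComp_ne_left hj0)
  have hyM : MemB hT S x k v0 j (y.1 (k + j)) :=
    vset_coord hT S x k v0 hwit h0 ⟨j0, hj0⟩ hyj
  rcases hyz (k + j) with he | ha
  · exact ⟨j, he ▸ hyM⟩
  · exact ⟨j, sameComp_trans (sameComp_of_adj ha.symm hzj hyj) hyM⟩

end AuxMem

section AuxMem2

variable {T : Family} (hT : IsPFF T) (S : FSeq T) (x : Limit S) (k : ℕ)
  (hwit : ∀ j : ℕ, IsWeakWitness (S.F (k + j)).graph (S.F (k + j + 1)).graph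
    (S.bond (k + j + 1) (k + j) (Nat.le_succ _)) (x.1 (k + j)) (x.1 (k + j + 1)))
  (v0 v1 : Fin (S.F k).card) (h0 : v0 ≠ x.1 k) (h1 : v1 ≠ x.1 k)

include hwit h0 h1 in
theorem rep_sameComp_down :
    ∀ j, SameComp (S.F (k + j)).graph (x.1 (k + j)) (repj hT S k v0 j) (repj hT S k v1 j) →
      SameComp (S.F k).graph (x.1 k) v0 v1
  | 0, h => h
  | j + 1, h => by
      apply rep_sameComp_down j
      have h3 := (hwit j).2.2 (repj hT S k v0 (j + 1)) (repj hT S k v1 (j + 1))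
        (by rw [repj_bond]; exact repj_ne hT S x k v0 h0 j)
        (by rw [repj_bond]; exact repj_ne hT S x k v1 h1 j)
      rw [repj_bond, repj_bond] at h3
      exact h3.mpr h

include hwit h0 h1 in
theorem vset_disjoint (hnc : ¬ SameComp (S.F k).graph (x.1 k) v0 v1) {y : Limit S}
    (hy0 : y ∈ VSet hT S x k v0) (hy1 : y ∈ VSet hT S x k v1) : False := by
  obtain ⟨j0, hj0⟩ := hy0
  obtain ⟨j1, hj1⟩ := hy1
  set j := max j0 j1 with hj
  have hyj : y.1 (k + j) ≠ x.1 (k + j) :=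
    coord_ne_up S x (Nat.add_le_add_left (le_max_left j0 j1) k) (sameComp_ne_left hj0)
  have hM0 : MemB hT S x k v0 j (y.1 (k + j)) :=
    vset_coord hT S x k v0 hwit h0 ⟨j0, hj0⟩ hyj
  have hM1 : MemB hT S x k v1 j (y.1 (k + j)) :=
    vset_coord hT S x k v1 hwit h1 ⟨j1, hj1⟩ hyj
  exact hnc (rep_sameComp_down hT S x k hwit v0 v1 h0 h1 j
    (sameComp_trans (sameComp_symm hM0) hM1))

omit hwit h0 h1

theorem vset_open : IsOpen (VSet hT S x k v0) := by
  have he : VSet hT S x k v0 =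
      ⋃ j, (fun y : Limit S => y.1 (k + j)) ⁻¹' {v | MemB hT S x k v0 j v} := by
    ext y
    simp only [Set.mem_iUnion, Set.mem_preimage, Set.mem_setOf_eq]
    rfl
  rw [he]
  refine isOpen_iUnion fun j => ?_
  exact ((continuous_apply (k + j)).comp continuous_subtype_val).isOpen_preimage _
    (isOpen_discrete _)

omit hT in
theorem kset_closed : IsClosed {y : Limit S | EdgeRel S x y} := by
  have he : {y : Limit S | EdgeRel S x y} =
      ⋂ n, (fun y : Limit S => y.1 n) ⁻¹' {v | x.1 n = v ∨ (S.F n).graph.Adj (x.1 n) v} := by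
    ext y
    simp only [Set.mem_iInter, Set.mem_preimage, Set.mem_setOf_eq]
    rfl
  rw [he]
  refine isClosed_iInter fun n => ?_
  exact IsClosed.preimage ((continuous_apply n).comp continuous_subtype_val)
    (isClosed_discrete _)

include hwit h0 in
theorem vset_closure {y : Limit S} (hy : y ∈ closure (VSet hT S x k v0)) (hyx : y ≠ x) :
    y ∈ VSet hT S x k v0 := by
  obtain ⟨n0, hn0⟩ := ne_coord S x hyx
  have hyj : y.1 (k + n0) ≠ x.1 (k + n0) := coord_ne_up S x (Nat.le_add_left n0 k) hn0
  have hU : IsOpen ((fun z : Limit S => z.1 (k + n0)) ⁻¹' {y.1 (k + n0)}) :=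
    ((continuous_apply (k + n0)).comp continuous_subtype_val).isOpen_preimage _
      (isOpen_discrete _)
  obtain ⟨z, hz1, hz2⟩ := mem_closure_iff.mp hy _ hU rfl
  have hzc : z.1 (k + n0) = y.1 (k + n0) := hz1
  have := vset_coord hT S x k v0 hwit h0 hz2 (j := n0) (by rw [hzc]; exact hyj)
  rw [hzc] at this
  exact ⟨n0, this⟩

end AuxMem2

section AuxQuot

variable {T : Family} (hT : IsPFF T) (S : FSeq T)

include hT in
theorem edgeRel_equiv (hsplit : AllowsSplitting T) (hS : IsFraisseSeq T S) :
    Equivalence (EdgeRel S) :=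
  ⟨edgeRel_refl S, edgeRel_symm S, edgeRel_trans hT S hsplit hS⟩

include hT in
theorem real_eq_iff (hsplit : AllowsSplitting T) (hS : IsFraisseSeq T S) (a b : Limit S) :
    realMap S a = realMap S b ↔ EdgeRel S a b := by
  change (Quot.mk (EdgeRel S) a : Quot (EdgeRel S)) = Quot.mk (EdgeRel S) b ↔ _
  rw [Quot.eq]
  exact (edgeRel_equiv hT S hsplit hS).eqvGen_iff

theorem real_isOpen_iff {O : Set (Realization S)} :
    IsOpen O ↔ IsOpen (realMap S ⁻¹' O) :=
  isQuotientMap_quot_mk.isOpen_preimage.symm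

end AuxQuot

section AuxPoint

variable {T : Family} (hT : IsPFF T) (S : FSeq T) (x : Limit S) (k : ℕ)

include hT in
theorem exists_branch_point (hsplit : AllowsSplitting T) (hS : IsFraisseSeq T S)
    (v0 : Fin (S.F k).card) (hadj : (S.F k).graph.Adj (x.1 k) v0) :
    ∃ p : Limit S, p ∈ VSet hT S x k v0 ∧ ¬ EdgeRel S x p := by
  obtain ⟨hobj', hmora, hmorb⟩ := hsplit (S.F k) (x.1 k) v0 (obj_mem hT S k) hadj
  obtain ⟨m, hm, g, hgmor, hcomm⟩ := hS.extend k _ _ hmorb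
  have hepi := hT.mor_epi _ _ _ hgmor
  set w := Function.surjInv hepi.1 v0.castSucc with hwdef
  have hgw : g w = v0.castSucc := Function.surjInv_eq _ _
  have hbw : S.bond m k hm w = v0 := by
    have h1 := congrFun hcomm w
    simp only [Function.comp_apply] at h1
    rw [← h1, hgw, splitMap_castSucc]
  have hbx : splitMap v0 (g (x.1 m)) = x.1 k := by
    have h1 := congrFun hcomm (x.1 m)
    simp only [Function.comp_apply] at h1
    rw [h1]; exact x.2 _ _ _
  have hxv : x.1 k ≠ v0 := hadj.ne
  have hgx : g (x.1 m) = (x.1 k).castSucc := splitMap_eq hbx hxv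
  have hwx : w ≠ x.1 m := by
    intro he
    apply hxv
    have h1 : g w = g (x.1 m) := by rw [he]
    rw [hgw, hgx] at h1
    exact (Fin.castSucc_inj.mp h1).symm
  have hnadj : ¬ (S.F m).graph.Adj (x.1 m) w := by
    intro h
    rcases hepi.adj_map h with he | ha
    · rw [hgx, hgw] at he; exact hxv (Fin.castSucc_inj.mp he)
    · rw [hgx, hgw] at ha; exact splitGraph_not_adj_split _ _ _ ha
  refine ⟨liftPoint hT S m w, ⟨0, ?_⟩, ?_⟩
  · have hcoordk : (liftPoint hT S m w).1 (k + 0) = v0 := by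
      have h1 : S.bond m k hm ((liftPoint hT S m w).1 m) = (liftPoint hT S m w).1 k :=
        (liftPoint hT S m w).2 _ _ _
      rw [liftPoint_coord] at h1
      show (liftPoint hT S m w).1 k = v0
      rw [← h1, hbw]
    show SameComp (S.F (k + 0)).graph (x.1 (k + 0)) ((liftPoint hT S m w).1 (k + 0))
      (repj hT S k v0 0)
    rw [hcoordk]
    exact sameComp_refl (Ne.symm hxv)
  · intro h
    rcases h m with he | ha
    · rw [liftPoint_coord] at he; exact hwx he.symm
    · rw [liftPoint_coord] at ha; exact hnadj ha

end AuxPoint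

end PF


/-- Let `𝒯` be a projective Fraïssé family of finite trees with monotone
epimorphisms that allows splitting edges, let `⟨G_i⟩` be a Fraïssé sequence for `𝒯`,
`𝔾` its inverse limit and `π : 𝔾 → |𝔾|` the topological realization.  Then `π` maps
every point of weak coherence of `𝔾` to a ramification point of `|𝔾|`, i.e. a point
whose complement has at least three connected components. -/
theorem weakCohPoint_maps_to_ramification (T : PF.Family) (hT : PF.IsPFF T)
    (htree : ∀ A : PF.FGraph, T.obj A → A.graph.IsTree)
    (hmono : ∀ (A B : PF.FGraph) (f : Fin B.card → Fin A.card),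
      T.mor A B f → PF.IsMonotone B.graph f)
    (hsplit : PF.AllowsSplitting T)
    (S : PF.FSeq T) (hS : PF.IsFraisseSeq T S)
    (x : PF.Limit S) (hx : PF.LimitWeakCohPoint S x) :
    3 ≤ PF.ordAt (PF.Realization S) (PF.realMap S x) := by
  classical
  obtain ⟨k, hk⟩ := hx
  have hwit : ∀ j, PF.IsWeakWitness (S.F (k + j)).graph (S.F (k + j + 1)).graph
      (S.bond (k + j + 1) (k + j) (Nat.le_succ _)) (x.1 (k + j)) (x.1 (k + j + 1)) :=
    fun j => (hk (k + j) (Nat.le_add_right k j)).2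
  have h3 : 3 ≤ PF.ord (S.F k).graph (x.1 k) := (hk k le_rfl).1
  -- three distinct neighbours of `x` at level `k`
  haveI : Finite ((S.F k).graph.neighborSet (x.1 k)) := Subtype.finite
  haveI := Fintype.ofFinite ((S.F k).graph.neighborSet (x.1 k))
  rw [PF.ord, Nat.card_eq_fintype_card] at h3
  obtain ⟨emb⟩ := Function.Embedding.nonempty_of_card_le (α := Fin 3)
    (β := (S.F k).graph.neighborSet (x.1 k)) (by rw [Fintype.card_fin]; exact h3)
  set N : Fin 3 → Fin (S.F k).card := fun i => (emb i).1 with hN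
  have hNadj : ∀ i, (S.F k).graph.Adj (x.1 k) (N i) := fun i => (emb i).2
  have hNinj : Function.Injective N := fun i i' h => emb.injective (Subtype.ext h)
  have hNne : ∀ i, N i ≠ x.1 k := fun i => (hNadj i).ne'
  have htreek : (S.F k).graph.IsTree := htree _ (PF.obj_mem hT S k)
  -- three branch points
  have key : ∀ i : Fin 3, ∃ p : PF.Limit S, p ∈ PF.VSet hT S x k (N i) ∧ ¬ PF.EdgeRel S x p :=
    fun i => PF.exists_branch_point hT S x k hsplit hS (N i) (hNadj i)
  choose p hpV hpK using key
  have hpi : ∀ a b : PF.Limit S, PF.realMap S a = PF.realMap S b ↔ PF.EdgeRel S a b :=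
    PF.real_eq_iff hT S hsplit hS
  set K : Set (PF.Limit S) := {y | PF.EdgeRel S x y} with hK
  have hpx : ∀ i, PF.realMap S (p i) ≠ PF.realMap S x :=
    fun i he => hpK i ((hpi x (p i)).mp he.symm)
  have hpnx : ∀ i, p i ≠ x := fun i he => hpK i (he ▸ PF.edgeRel_refl S x)
  -- saturated open/closed sets in the realization
  have hsatO : ∀ i, PF.realMap S ⁻¹' (PF.realMap S '' (PF.VSet hT S x k (N i) \ K)) =
      PF.VSet hT S x k (N i) \ K := by
    intro i
    ext z
    constructor
    · rintro ⟨a, ⟨haV, haK⟩, hab⟩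
      have hE : PF.EdgeRel S a z := (hpi a z).mp hab
      have hzx : z ≠ x := by
        rintro rfl
        exact haK (PF.edgeRel_symm S hE)
      refine ⟨PF.vset_of_edge hT S x k (N i) hwit (hNne i) haV hE hzx, ?_⟩
      intro hzK
      exact haK ((PF.edgeRel_equiv hT S hsplit hS).trans hzK (PF.edgeRel_symm S hE))
    · intro hz
      exact ⟨z, hz, rfl⟩
  have hOopen : ∀ i, IsOpen (PF.realMap S '' (PF.VSet hT S x k (N i) \ K)) := by
    intro i
    rw [PF.real_isOpen_iff, hsatO i]
    exact (PF.vset_open hT S x k (N i)).sdiff (PF.kset_closed S x)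
  have hclosedVK : ∀ i, IsClosed (PF.VSet hT S x k (N i) ∪ K) := by
    intro i
    refine isClosed_of_closure_subset ?_
    rw [closure_union, (PF.kset_closed S x).closure_eq]
    rintro z (hz | hz)
    · by_cases hzx : z = x
      · exact Or.inr (by rw [hK]; exact Set.mem_setOf_eq ▸ (hzx ▸ PF.edgeRel_refl S x))
      · exact Or.inl (PF.vset_closure hT S x k hwit (N i) (hNne i) hz hzx)
    · exact Or.inr hz
  have hsatW : ∀ i, PF.realMap S ⁻¹' (PF.realMap S '' (PF.VSet hT S x k (N i) ∪ K)ᶜ) =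
      (PF.VSet hT S x k (N i) ∪ K)ᶜ := by
    intro i
    ext z
    constructor
    · rintro ⟨b, hbV, hbz⟩
      have hE : PF.EdgeRel S b z := (hpi b z).mp hbz
      rw [Set.mem_compl_iff, Set.mem_union] at hbV ⊢
      push_neg at hbV ⊢
      obtain ⟨hbV, hbK⟩ := hbV
      have hbx : b ≠ x := fun he => hbK (he ▸ PF.edgeRel_refl S x)
      have hzK : z ∉ K := fun hzK =>
        hbK ((PF.edgeRel_equiv hT S hsplit hS).trans hzK (PF.edgeRel_symm S hE))
      refine ⟨?_, hzK⟩
      intro hzV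
      exact hbV (PF.vset_of_edge hT S x k (N i) hwit (hNne i) hzV (PF.edgeRel_symm S hE) hbx)
    · intro hz
      exact ⟨z, hz, rfl⟩
  have hWopen : ∀ i, IsOpen (PF.realMap S '' (PF.VSet hT S x k (N i) ∪ K)ᶜ) := by
    intro i
    rw [PF.real_isOpen_iff, hsatW i]
    exact (hclosedVK i).isOpen_compl
  -- move to the subtype
  set Y := {y : PF.Realization S // y ≠ PF.realMap S x} with hY
  set Q : Fin 3 → Y := fun i => ⟨PF.realMap S (p i), hpx i⟩ with hQ
  set U : Fin 3 → Set Y :=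
    fun i => Subtype.val ⁻¹' (PF.realMap S '' (PF.VSet hT S x k (N i) \ K)) with hU
  have hUopen : ∀ i, IsOpen (U i) := fun i => (hOopen i).preimage continuous_subtype_val
  have hUcompl : ∀ i, (U i)ᶜ =
      Subtype.val ⁻¹' (PF.realMap S '' (PF.VSet hT S x k (N i) ∪ K)ᶜ) := by
    intro i
    ext e
    obtain ⟨z, hz⟩ := Quot.exists_rep e.1
    have hzmk : PF.realMap S z = e.1 := hz
    have hzK : z ∉ K := by
      intro h
      exact e.2 (by rw [← hzmk]; exact ((hpi z x).mpr (PF.edgeRel_symm S h)))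
    constructor
    · intro he
      have hzV : z ∉ PF.VSet hT S x k (N i) := by
        intro hzV
        exact he (by rw [hU]; exact Set.mem_preimage.mpr (by rw [← hzmk]; exact ⟨z, ⟨hzV, hzK⟩, rfl⟩))
      show e.1 ∈ PF.realMap S '' (PF.VSet hT S x k (N i) ∪ K)ᶜ
      rw [← hzmk]
      exact ⟨z, by simp [Set.mem_union, hzV, hzK], rfl⟩
    · intro he hU'
      obtain ⟨b, hbV, hbz⟩ := he
      obtain ⟨a, ⟨haV, haK⟩, haz⟩ := hU'
      rw [Set.mem_compl_iff, Set.mem_union] at hbV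
      push_neg at hbV
      have hE : PF.EdgeRel S a b := (hpi a b).mp (by rw [haz, ← hbz])
      have hbx : b ≠ x := fun hbe => hbV.2 (hbe ▸ PF.edgeRel_refl S x)
      exact hbV.1 (PF.vset_of_edge hT S x k (N i) hwit (hNne i) haV hE hbx)
  have hUclosed : ∀ i, IsClosed (U i) := by
    intro i
    rw [← isOpen_compl_iff, hUcompl i]
    exact (hWopen i).preimage continuous_subtype_val
  have hQU : ∀ i, Q i ∈ U i := fun i => ⟨p i, ⟨hpV i, hpK i⟩, rfl⟩
  have hQnot : ∀ i i', i ≠ i' → Q i' ∉ U i := by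
    intro i i' hne hmem
    obtain ⟨a, ⟨haV, haK⟩, haz⟩ := hmem
    have hE : PF.EdgeRel S a (p i') := (hpi a (p i')).mp haz
    have hpV' : p i' ∈ PF.VSet hT S x k (N i) :=
      PF.vset_of_edge hT S x k (N i) hwit (hNne i) haV hE (hpnx i')
    have hnc : ¬ PF.SameComp (S.F k).graph (x.1 k) (N i) (N i') :=
      PF.not_sameComp_of_adj_adj htreek (hNadj i) (hNadj i') (fun h => hne (hNinj h))
    exact PF.vset_disjoint hT S x k hwit (N i) (N i') (hNne i) (hNne i') hnc hpV' (hpV i')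
  -- distinct connected components
  have hinj : Function.Injective (fun i : Fin 3 => ConnectedComponents.mk (Q i)) := by
    intro i i' h
    by_contra hne
    have hcc : connectedComponent (Q i) = connectedComponent (Q i') :=
      ConnectedComponents.coe_eq_coe.mp h
    have hsub : connectedComponent (Q i) ⊆ U i :=
      IsClopen.connectedComponent_subset ⟨hUclosed i, hUopen i⟩ (hQU i)
    have : Q i' ∈ U i := hsub (hcc ▸ mem_connectedComponent)
    exact hQnot i i' hne this
  have hc := Cardinal.mk_le_of_injective hinj
  rw [Cardinal.mk_fin] at hc
  show ((3 : ℕ∞)) ≤ ENat.card (ConnectedComponents Y)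
  show ((3 : ℕ∞)) ≤ Cardinal.toENat (Cardinal.mk (ConnectedComponents Y))
  have h3c : ((3 : ℕ) : ℕ∞) ≤ Cardinal.toENat (Cardinal.mk (ConnectedComponents Y)) := by
    rw [Cardinal.natCast_le_toENat_iff]
    exact_mod_cast hc
  exact_mod_cast h3c
end
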